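/- arXiv:1606.04789 — 8 statements merged into one kernel-verified Lean document; each statement's English description precedes it below -/
import Mathlib

section
/- Let X₁,…,Xₙ be finite discrete random variables, with Xᵢ taking values in an alphabet of size Kᵢ ≥ 2 and with all marginal probabilities strictly positive, and let G=(V,E) be a finite simple graph on {1,…,n}. Then the network maximal correlation ρ_G(X₁,…,Xₙ) equals the supremum, over all tuples of vectors aᵢ ∈ ℝ^{Kᵢ} satisfying ‖aᵢ‖₂ = 1 and ⟨aᵢ, √pᵢ⟩ = 0 for every i, of Σ_{(i,i')∈E} aᵢᵀ Q_{i,i'} a_{i'}, where √pᵢ is the entrywise square root of the marginal pmf of Xᵢ. -/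
open MeasureTheory

lemma integral_comp_fin {Ω : Type*} [MeasurableSpace Ω] (μ : Measure Ω) [IsProbabilityMeasure μ]
    {K : ℕ} (X : Ω → Fin K) (hX : Measurable X) (f : Fin K → ℝ) :
    ∫ ω, f (X ω) ∂μ = ∑ j, f j * (μ (X ⁻¹' {j})).toReal := by
  classical
  have key : ∀ ω, f (X ω) = ∑ j, Set.indicator (X ⁻¹' {j}) (fun _ => f j) ω := by
    intro ω
    symm
    rw [Finset.sum_congr rfl fun j _ => Set.indicator_apply (X ⁻¹' {j}) (fun _ => f j) ω]
    simp only [Set.mem_preimage, Set.mem_singleton_iff]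
    rw [Finset.sum_ite_eq]
    simp
  simp_rw [key]
  rw [integral_finset_sum]
  · refine Finset.sum_congr rfl fun j _ => ?_
    rw [integral_indicator_const _ (hX (measurableSet_singleton j)), smul_eq_mul, mul_comm]
    rfl
  · exact fun j _ => (integrable_const _).indicator (hX (measurableSet_singleton j))

lemma integral_comp_fin2 {Ω : Type*} [MeasurableSpace Ω] (μ : Measure Ω) [IsProbabilityMeasure μ]
    {K₁ K₂ : ℕ} (X : Ω → Fin K₁) (Y : Ω → Fin K₂) (hX : Measurable X) (hY : Measurable Y)
    (f : Fin K₁ → ℝ) (g : Fin K₂ → ℝ) :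
    ∫ ω, f (X ω) * g (Y ω) ∂μ
      = ∑ j, ∑ j', f j * g j' * (μ (X ⁻¹' {j} ∩ Y ⁻¹' {j'})).toReal := by
  classical
  have key : ∀ ω, f (X ω) * g (Y ω)
      = ∑ j, ∑ j', Set.indicator (X ⁻¹' {j} ∩ Y ⁻¹' {j'}) (fun _ => f j * g j') ω := by
    intro ω
    symm
    rw [Finset.sum_congr rfl fun j _ => Finset.sum_congr rfl fun j' _ =>
      Set.indicator_apply (X ⁻¹' {j} ∩ Y ⁻¹' {j'}) (fun _ => f j * g j') ω]
    simp only [Set.mem_inter_iff, Set.mem_preimage, Set.mem_singleton_iff, ite_and]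
    rw [Finset.sum_comm]
    simp [Finset.sum_ite_eq]
  simp_rw [key]
  rw [integral_finset_sum]
  · refine Finset.sum_congr rfl fun j _ => ?_
    rw [integral_finset_sum]
    · refine Finset.sum_congr rfl fun j' _ => ?_
      rw [integral_indicator_const _
        ((hX (measurableSet_singleton j)).inter (hY (measurableSet_singleton j'))),
        smul_eq_mul, mul_comm]
      rfl
    · exact fun j' _ => (integrable_const _).indicator
        ((hX (measurableSet_singleton j)).inter (hY (measurableSet_singleton j')))
  · exact fun j _ => integrable_finset_sum _ fun j' _ => (integrable_const _).indicator
      ((hX (measurableSet_singleton j)).inter (hY (measurableSet_singleton j')))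


/-- For finite discrete random variables with strictly positive marginals,
the network maximal correlation equals the supremum of `∑_{(i,i')∈E} aᵢᵀ Q_{i,i'} a_{i'}`
over unit vectors `aᵢ` orthogonal to `√pᵢ`. -/
theorem nmc_eq_vector_form
    {Ω : Type*} [MeasurableSpace Ω] (μ : Measure Ω) [IsProbabilityMeasure μ]
    (n : ℕ) (K : Fin n → ℕ) (hK : ∀ i, 2 ≤ K i)
    (X : ∀ i, Ω → Fin (K i)) (hX : ∀ i, Measurable (X i))
    (hpos : ∀ i (j : Fin (K i)), 0 < (μ (X i ⁻¹' {j})).toReal)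
    (E : Finset (Fin n × Fin n)) (hE : ∀ e ∈ E, e.1 ≠ e.2) :
    sSup {r : ℝ | ∃ φ : ∀ i, Fin (K i) → ℝ,
        (∀ i, Measurable (φ i)) ∧
        (∀ i, (∫ ω, φ i (X i ω) ∂μ) = 0) ∧
        (∀ i, (∫ ω, (φ i (X i ω)) ^ 2 ∂μ) = 1) ∧
        r = ∑ e ∈ E, ∫ ω, φ e.1 (X e.1 ω) * φ e.2 (X e.2 ω) ∂μ}
      = sSup {r : ℝ | ∃ a : ∀ i, Fin (K i) → ℝ,
        (∀ i, ∑ j, (a i j) ^ 2 = 1) ∧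
        (∀ i, ∑ j, a i j * Real.sqrt ((μ (X i ⁻¹' {j})).toReal) = 0) ∧
        r = ∑ e ∈ E, ∑ j, ∑ j',
          a e.1 j *
            ((μ (X e.1 ⁻¹' {j} ∩ X e.2 ⁻¹' {j'})).toReal /
              Real.sqrt ((μ (X e.1 ⁻¹' {j})).toReal * (μ (X e.2 ⁻¹' {j'})).toReal)) *
          a e.2 j'} := by
  set p : ∀ i, Fin (K i) → ℝ := fun i j => (μ (X i ⁻¹' {j})).toReal with hp
  have hsq : ∀ i j, Real.sqrt (p i j) ≠ 0 := fun i j =>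
    ne_of_gt (Real.sqrt_pos.mpr (hpos i j))
  congr 1
  ext r
  constructor
  · rintro ⟨φ, -, hmean, hvar, hr⟩
    refine ⟨fun i j => φ i j * Real.sqrt (p i j), fun i => ?_, fun i => ?_, ?_⟩
    · have h := hvar i
      simp only [integral_comp_fin μ (X i) (hX i) (fun j => (φ i j) ^ 2)] at h
      calc ∑ j, (φ i j * Real.sqrt (p i j)) ^ 2 = ∑ j, (φ i j)^2 * p i j := by
            refine Finset.sum_congr rfl fun j _ => ?_
            rw [mul_pow, Real.sq_sqrt (hpos i j).le]
        _ = 1 := h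
    · have h := hmean i
      simp only [integral_comp_fin μ (X i) (hX i) (φ i)] at h
      calc ∑ j, φ i j * Real.sqrt (p i j) * Real.sqrt (p i j) = ∑ j, φ i j * p i j := by
            refine Finset.sum_congr rfl fun j _ => ?_
            rw [mul_assoc, Real.mul_self_sqrt (hpos i j).le]
        _ = 0 := h
    · rw [hr]
      refine Finset.sum_congr rfl fun e _ => ?_
      simp only [integral_comp_fin2 μ (X e.1) (X e.2) (hX e.1) (hX e.2) (φ e.1) (φ e.2)]
      refine Finset.sum_congr rfl fun j _ => Finset.sum_congr rfl fun j' _ => ?_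
      have h1 : Real.sqrt (p e.1 j) ≠ 0 := hsq _ _
      have h2 : Real.sqrt (p e.2 j') ≠ 0 := hsq _ _
      rw [Real.sqrt_mul (hpos e.1 j).le]
      simp only [hp] at h1 h2 ⊢
      field_simp
  · rintro ⟨a, hnorm, horth, hr⟩
    refine ⟨fun i j => a i j / Real.sqrt (p i j), fun i => measurable_of_countable _,
      fun i => ?_, fun i => ?_, ?_⟩
    · simp only [integral_comp_fin μ (X i) (hX i) (fun j => a i j / Real.sqrt (p i j))]
      calc ∑ j, a i j / Real.sqrt (p i j) * p i j = ∑ j, a i j * Real.sqrt (p i j) := by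
            refine Finset.sum_congr rfl fun j _ => ?_
            rw [div_mul_eq_mul_div, mul_div_assoc, Real.div_sqrt]
        _ = 0 := horth i
    · simp only [integral_comp_fin μ (X i) (hX i)
        (fun j => (a i j / Real.sqrt (p i j)) ^ 2)]
      calc ∑ j, (a i j / Real.sqrt (p i j)) ^ 2 * p i j = ∑ j, (a i j)^2 := by
            refine Finset.sum_congr rfl fun j _ => ?_
            rw [div_pow, Real.sq_sqrt (hpos i j).le, div_mul_cancel₀]
            exact ne_of_gt (hpos i j)
        _ = 1 := hnorm i
    · rw [hr]
      refine Finset.sum_congr rfl fun e _ => ?_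
      symm
      simp only [integral_comp_fin2 μ (X e.1) (X e.2) (hX e.1) (hX e.2)
        (fun j => a e.1 j / Real.sqrt (p e.1 j)) (fun j' => a e.2 j' / Real.sqrt (p e.2 j'))]
      refine Finset.sum_congr rfl fun j _ => Finset.sum_congr rfl fun j' _ => ?_
      have h1 : Real.sqrt (p e.1 j) ≠ 0 := hsq _ _
      have h2 : Real.sqrt (p e.2 j') ≠ 0 := hsq _ _
      rw [Real.sqrt_mul (hpos e.1 j).le]
      simp only [hp] at h1 h2 ⊢
      field_simp
end

section
/- Let X₁,…,Xₙ be finite discrete random variables with alphabet sizes Kᵢ ≥ 2 and strictly positive marginal pmfs pᵢ, and let G=(V,E) be a finite simple graph on {1,…,n}. For each i let √pᵢ ∈ ℝ^{Kᵢ} be the entrywise square root of pᵢ and let Pᵢ = I_{Kᵢ} − √pᵢ √pᵢᵀ be the orthogonal projection onto the orthogonal complement of √pᵢ (this projection equals both the matrix Bᵢ = √(I − √pᵢ√pᵢᵀ) and its pseudoinverse Aᵢ on the range of Bᵢ). Then the supremum, over tuples (aᵢ) with aᵢ ∈ ℝ^{Kᵢ}, ‖aᵢ‖₂ = 1 and ⟨aᵢ,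 √pᵢ⟩ = 0, of Σ_{(i,i')∈E} aᵢᵀ Q_{i,i'} a_{i'} equals the supremum, over tuples (bᵢ) with bᵢ ∈ ℝ^{Kᵢ} and ‖bᵢ‖₂ = 1, of Σ_{(i,i')∈E} bᵢᵀ Pᵢ (Q_{i,i'} − √pᵢ √p_{i'}ᵀ) P_{i'} b_{i'}. -/
open Matrix

/-- Marginal pmf of coordinate `i` of a joint pmf `P`. -/
noncomputable def margPmf {n : ℕ} (K : Fin n → ℕ) (P : (∀ i, Fin (K i)) → ℝ)
    (i : Fin n) (j : Fin (K i)) : ℝ :=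
  ∑ x : ∀ i, Fin (K i), if x i = j then P x else 0

/-- Pairwise marginal pmf of coordinates `i, i'` of a joint pmf `P`. -/
noncomputable def pairPmf {n : ℕ} (K : Fin n → ℕ) (P : (∀ i, Fin (K i)) → ℝ)
    (i i' : Fin n) (j : Fin (K i)) (j' : Fin (K i')) : ℝ :=
  ∑ x : ∀ i, Fin (K i), if x i = j ∧ x i' = j' then P x else 0

/-- The `Q`-matrix of the pair `(i,i')`: `Q(j,j') = P_{i,i'}(j,j')/√(pᵢ(j)·p_{i'}(j'))`. -/
noncomputable def Qpmf {n : ℕ} (K : Fin n → ℕ) (P : (∀ i, Fin (K i)) → ℝ)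
    (i i' : Fin n) : Matrix (Fin (K i)) (Fin (K i')) ℝ :=
  fun j j' => pairPmf K P i i' j j' / Real.sqrt (margPmf K P i j * margPmf K P i' j')

/-- Entrywise square root of the marginal pmf of coordinate `i`. -/
noncomputable def sqrtPmf {n : ℕ} (K : Fin n → ℕ) (P : (∀ i, Fin (K i)) → ℝ)
    (i : Fin n) : Fin (K i) → ℝ :=
  fun j => Real.sqrt (margPmf K P i j)

/-- Orthogonal projection `I − √pᵢ √pᵢᵀ` onto the orthogonal complement of `√pᵢ`. -/
noncomputable def projPmf {n : ℕ} (K : Fin n → ℕ) (P : (∀ i, Fin (K i)) → ℝ)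
    (i : Fin n) : Matrix (Fin (K i)) (Fin (K i)) ℝ :=
  1 - Matrix.vecMulVec (sqrtPmf K P i) (sqrtPmf K P i)


lemma vecMulVec_mulVec' {K L : ℕ} (w : Fin K → ℝ) (v x : Fin L → ℝ) :
    (vecMulVec w v).mulVec x = (v ⬝ᵥ x) • w := by
  funext j
  simp [Matrix.mulVec, vecMulVec_apply, dotProduct, Finset.sum_mul, mul_assoc, mul_comm,
    mul_left_comm, Finset.mul_sum]

lemma dotProduct_sq_eq {K : ℕ} (v : Fin K → ℝ) : v ⬝ᵥ v = ∑ j, (v j) ^ 2 := by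
  simp [dotProduct, sq]

lemma cauchy_aux {K : ℕ} (g c : Fin K → ℝ) (hc : c ⬝ᵥ c ≤ 1) :
    g ⬝ᵥ c ≤ Real.sqrt (g ⬝ᵥ g) := by
  have h := Finset.sum_mul_sq_le_sq_mul_sq (Finset.univ) g c
  have hgg : (0:ℝ) ≤ g ⬝ᵥ g := by
    rw [dotProduct_sq_eq]; positivity
  have hcc : (0:ℝ) ≤ c ⬝ᵥ c := by
    rw [dotProduct_sq_eq]; positivity
  have h2 : (g ⬝ᵥ c) ^ 2 ≤ (g ⬝ᵥ g) * 1 := by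
    rw [dotProduct_sq_eq g, dotProduct_sq_eq c] at *
    exact h.trans (by nlinarith)
  rw [mul_one] at h2
  calc g ⬝ᵥ c ≤ |g ⬝ᵥ c| := le_abs_self _
    _ ≤ Real.sqrt (g ⬝ᵥ g) := by
        rw [← Real.sqrt_sq_eq_abs]
        exact Real.sqrt_le_sqrt h2

lemma exists_unit_perp_ge {K : ℕ} (hK : 2 ≤ K) (u : Fin K → ℝ)
    (hu : u ⬝ᵥ u = 1) (hupos : ∀ j, 0 < u j)
    (g c : Fin K → ℝ) (hc1 : c ⬝ᵥ c ≤ 1) (hc2 : c ⬝ᵥ u = 0) :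
    ∃ v : Fin K → ℝ, v ⬝ᵥ v = 1 ∧ v ⬝ᵥ u = 0 ∧ g ⬝ᵥ c ≤ g ⬝ᵥ v := by
  set g' : Fin K → ℝ := g - (g ⬝ᵥ u) • u with hg'def
  have huc : u ⬝ᵥ c = 0 := by rw [dotProduct_comm]; exact hc2
  have hg'c : g' ⬝ᵥ c = g ⬝ᵥ c := by
    simp [hg'def, sub_dotProduct, smul_dotProduct, huc]
  have hg'u : g' ⬝ᵥ u = 0 := by
    simp [hg'def, sub_dotProduct, smul_dotProduct, hu]
  by_cases hz : g' = 0
  · -- need any unit vector perp to u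
    have h0 : (0:ℕ) < K := by omega
    have h1 : (1:ℕ) < K := by omega
    set j0 : Fin K := ⟨0, h0⟩
    set j1 : Fin K := ⟨1, h1⟩
    have hne : j0 ≠ j1 := by simp [j0, j1, Fin.ext_iff]
    set N : ℝ := Real.sqrt ((u j0)^2 + (u j1)^2) with hN
    have hNpos : 0 < N := Real.sqrt_pos.2 (by have := hupos j0; have := hupos j1; positivity)
    set v : Fin K → ℝ := (u j1 / N) • (Pi.single j0 (1:ℝ) : Fin K → ℝ) - (u j0 / N) • (Pi.single j1 (1:ℝ) : Fin K → ℝ) with hv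
    have hvu : v ⬝ᵥ u = 0 := by
      simp [hv, sub_dotProduct, smul_dotProduct, single_dotProduct]
      ring
    have hvj0 : v j0 = u j1 / N := by
      simp only [hv, Pi.sub_apply, Pi.smul_apply, Pi.single_eq_same,
        Pi.single_eq_of_ne hne, smul_eq_mul]
      ring
    have hvj1 : v j1 = -(u j0 / N) := by
      simp only [hv, Pi.sub_apply, Pi.smul_apply, Pi.single_eq_same,
        Pi.single_eq_of_ne hne.symm, smul_eq_mul]
      ring
    have hvv : v ⬝ᵥ v = 1 := by
      have hN2 : N ^ 2 = (u j0)^2 + (u j1)^2 := by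
        rw [hN, Real.sq_sqrt (by positivity)]
      have : v ⬝ᵥ v = (u j1 / N) * v j0 - (u j0 / N) * v j1 := by
        simp [hv, sub_dotProduct, smul_dotProduct, single_dotProduct]
      rw [this, hvj0, hvj1]
      field_simp
      linarith [hN2]
    refine ⟨v, hvv, hvu, ?_⟩
    have hgc0 : g ⬝ᵥ c = 0 := by rw [← hg'c, hz]; simp
    have hdiff : g ⬝ᵥ v - g' ⬝ᵥ v = 0 := by
      rw [← sub_dotProduct]
      have hgg : g - g' = (g ⬝ᵥ u) • u := by simp [hg'def]
      rw [hgg, smul_dotProduct, dotProduct_comm u v, hvu, smul_eq_mul, mul_zero]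
    have hgv : g ⬝ᵥ v = 0 := by
      have : g' ⬝ᵥ v = 0 := by rw [hz]; simp
      linarith
    rw [hgc0, hgv]
  · -- g' ≠ 0
    have hgg' : 0 < g' ⬝ᵥ g' := by
      rcases (dotProduct_self_eq_zero (v := g')).not.2 hz with h
      have hnn : 0 ≤ g' ⬝ᵥ g' := by rw [dotProduct_sq_eq]; positivity
      exact lt_of_le_of_ne hnn (Ne.symm h)
    set s : ℝ := Real.sqrt (g' ⬝ᵥ g') with hs
    have hspos : 0 < s := Real.sqrt_pos.2 hgg'
    set v : Fin K → ℝ := s⁻¹ • g' with hv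
    have hvv : v ⬝ᵥ v = 1 := by
      rw [hv, smul_dotProduct, dotProduct_smul]
      have : s * s = g' ⬝ᵥ g' := Real.mul_self_sqrt hgg'.le
      field_simp
      simp only [smul_eq_mul]
      rw [← this]
      field_simp
    have hvu : v ⬝ᵥ u = 0 := by
      rw [hv, smul_dotProduct, hg'u]; simp
    refine ⟨v, hvv, hvu, ?_⟩
    have hgv : g ⬝ᵥ v = s := by
      have hdiff : g ⬝ᵥ v - g' ⬝ᵥ v = 0 := by
        rw [← sub_dotProduct]
        have hgg : g - g' = (g ⬝ᵥ u) • u := by simp [hg'def]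
        rw [hgg, smul_dotProduct, dotProduct_comm u v, hvu, smul_eq_mul, mul_zero]
      have hg'v : g' ⬝ᵥ v = s := by
        rw [hv, dotProduct_smul, smul_eq_mul,
          show g' ⬝ᵥ g' = s * s from (Real.mul_self_sqrt hgg'.le).symm]
        field_simp
      linarith
    rw [← hg'c, hgv]
    exact cauchy_aux g' c hc1

lemma affine_update {n : ℕ} (K : Fin n → ℕ)
    (Q : ∀ i i' : Fin n, Matrix (Fin (K i)) (Fin (K i')) ℝ)
    (E : Finset (Fin n × Fin n)) (hE : ∀ e ∈ E, e.1 ≠ e.2)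
    (a : ∀ i, Fin (K i) → ℝ) (i : Fin n) (v : Fin (K i) → ℝ) :
    (∑ e ∈ E, (Function.update a i v) e.1 ⬝ᵥ (Q e.1 e.2).mulVec ((Function.update a i v) e.2))
      = (fun j => (∑ e ∈ E, (Function.update a i (Pi.single j 1)) e.1 ⬝ᵥ
              (Q e.1 e.2).mulVec ((Function.update a i (Pi.single j 1)) e.2))
          - (∑ e ∈ E, (Function.update a i 0) e.1 ⬝ᵥ
              (Q e.1 e.2).mulVec ((Function.update a i 0) e.2))) ⬝ᵥ v
        + (∑ e ∈ E, (Function.update a i 0) e.1 ⬝ᵥ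
              (Q e.1 e.2).mulVec ((Function.update a i 0) e.2)) := by
  classical
  have key : ∀ e ∈ E,
      (Function.update a i v) e.1 ⬝ᵥ (Q e.1 e.2).mulVec ((Function.update a i v) e.2)
        = ∑ j, ((Function.update a i (Pi.single j 1)) e.1 ⬝ᵥ
              (Q e.1 e.2).mulVec ((Function.update a i (Pi.single j 1)) e.2)
            - (Function.update a i 0) e.1 ⬝ᵥ
              (Q e.1 e.2).mulVec ((Function.update a i 0) e.2)) * v j
          + (Function.update a i 0) e.1 ⬝ᵥ (Q e.1 e.2).mulVec ((Function.update a i 0) e.2) := by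
    intro e he
    obtain ⟨e1, e2⟩ := e
    have hne : e1 ≠ e2 := hE _ he
    by_cases h1 : e1 = i
    · subst h1
      have h2 : e2 ≠ e1 := hne.symm
      simp only [Function.update_self, Function.update_of_ne h2, zero_dotProduct,
        sub_zero, add_zero, single_dotProduct, one_mul]
      rw [dotProduct_comm]
      rfl
    · by_cases h2 : e2 = i
      · subst h2
        simp only [Function.update_self, Function.update_of_ne h1, Matrix.mulVec_zero,
          dotProduct_zero, sub_zero, add_zero]
        rw [Matrix.dotProduct_mulVec]
        simp only [Matrix.dotProduct_mulVec, dotProduct_single, mul_one]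
        rfl
      · simp only [Function.update_of_ne h1, Function.update_of_ne h2]
        simp
  rw [Finset.sum_congr rfl key, Finset.sum_add_distrib]
  congr 1
  rw [Finset.sum_comm]
  simp only [dotProduct]
  refine Finset.sum_congr rfl fun j _ => ?_
  rw [← Finset.sum_mul, Finset.sum_sub_distrib]


lemma exists_good {n : ℕ} (K : Fin n → ℕ) (hK : ∀ i, 2 ≤ K i)
    (u : ∀ i, Fin (K i) → ℝ) (hu : ∀ i, u i ⬝ᵥ u i = 1) (hupos : ∀ i j, 0 < u i j)
    (Q : ∀ i i' : Fin n, Matrix (Fin (K i)) (Fin (K i')) ℝ)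
    (E : Finset (Fin n × Fin n)) (hE : ∀ e ∈ E, e.1 ≠ e.2)
    (c : ∀ i, Fin (K i) → ℝ) (hc1 : ∀ i, c i ⬝ᵥ c i ≤ 1) (hc2 : ∀ i, c i ⬝ᵥ u i = 0) :
    ∃ a : ∀ i, Fin (K i) → ℝ, (∀ i, a i ⬝ᵥ a i = 1) ∧ (∀ i, a i ⬝ᵥ u i = 0) ∧
      (∑ e ∈ E, c e.1 ⬝ᵥ (Q e.1 e.2).mulVec (c e.2))
        ≤ ∑ e ∈ E, a e.1 ⬝ᵥ (Q e.1 e.2).mulVec (a e.2) := by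
  classical
  suffices h : ∀ S : Finset (Fin n), ∃ a : ∀ i, Fin (K i) → ℝ,
      (∀ i, a i ⬝ᵥ a i ≤ 1) ∧ (∀ i, a i ⬝ᵥ u i = 0) ∧ (∀ i ∈ S, a i ⬝ᵥ a i = 1) ∧
      (∑ e ∈ E, c e.1 ⬝ᵥ (Q e.1 e.2).mulVec (c e.2))
        ≤ ∑ e ∈ E, a e.1 ⬝ᵥ (Q e.1 e.2).mulVec (a e.2) by
    obtain ⟨a, _, h2, h3, h4⟩ := h Finset.univ
    exact ⟨a, fun i => h3 i (Finset.mem_univ i), h2, h4⟩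
  intro S
  induction S using Finset.induction_on with
  | empty => exact ⟨c, hc1, hc2, by simp, le_refl _⟩
  | @insert i S hiS ih =>
    obtain ⟨a, h1, h2, h3, h4⟩ := ih
    obtain ⟨v, hv1, hv2, hv3⟩ := exists_unit_perp_ge (hK i) (u i) (hu i) (hupos i)
      (fun j => (∑ e ∈ E, (Function.update a i (Pi.single j 1)) e.1 ⬝ᵥ
              (Q e.1 e.2).mulVec ((Function.update a i (Pi.single j 1)) e.2))
          - (∑ e ∈ E, (Function.update a i 0) e.1 ⬝ᵥ
              (Q e.1 e.2).mulVec ((Function.update a i 0) e.2)))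
      (a i) (h1 i) (h2 i)
    refine ⟨Function.update a i v, ?_, ?_, ?_, ?_⟩
    · intro k
      by_cases hk : k = i
      · subst hk; rw [Function.update_self]; exact le_of_eq hv1
      · rw [Function.update_of_ne hk]; exact h1 k
    · intro k
      by_cases hk : k = i
      · subst hk; rw [Function.update_self]; exact hv2
      · rw [Function.update_of_ne hk]; exact h2 k
    · intro k hk
      by_cases hki : k = i
      · subst hki; rw [Function.update_self]; exact hv1
      · rw [Function.update_of_ne hki]
        exact h3 k ((Finset.mem_insert.1 hk).resolve_left hki)
    · refine h4.trans ?_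
      have e1 := affine_update K Q E hE a i (a i)
      have e2 := affine_update K Q E hE a i v
      rw [Function.update_eq_self i a] at e1
      rw [e1, e2]
      exact add_le_add_left hv3 _

/-- The constrained vector form of NMC equals the unconstrained
(unit-sphere) form obtained by projecting through `Pᵢ = I − √pᵢ√pᵢᵀ`. -/
theorem nmc_vector_eq_projected_form
    (n : ℕ) (K : Fin n → ℕ) (hK : ∀ i, 2 ≤ K i)
    (P : (∀ i, Fin (K i)) → ℝ) (hP0 : ∀ x, 0 ≤ P x) (hP1 : ∑ x, P x = 1)
    (hpos : ∀ i (j : Fin (K i)), 0 < margPmf K P i j)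
    (E : Finset (Fin n × Fin n)) (hE : ∀ e ∈ E, e.1 ≠ e.2) :
    sSup {r : ℝ | ∃ a : ∀ i, Fin (K i) → ℝ,
        (∀ i, ∑ j, (a i j) ^ 2 = 1) ∧
        (∀ i, ∑ j, a i j * sqrtPmf K P i j = 0) ∧
        r = ∑ e ∈ E, a e.1 ⬝ᵥ (Qpmf K P e.1 e.2).mulVec (a e.2)}
      = sSup {r : ℝ | ∃ b : ∀ i, Fin (K i) → ℝ,
        (∀ i, ∑ j, (b i j) ^ 2 = 1) ∧
        r = ∑ e ∈ E, b e.1 ⬝ᵥ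
          ((projPmf K P e.1 *
            (Qpmf K P e.1 e.2 - Matrix.vecMulVec (sqrtPmf K P e.1) (sqrtPmf K P e.2)) *
            projPmf K P e.2).mulVec (b e.2))} := by
  classical
  set u : ∀ i, Fin (K i) → ℝ := sqrtPmf K P with hudef
  have hmarg : ∀ i, ∑ j, margPmf K P i j = 1 := by
    intro i
    unfold margPmf
    rw [Finset.sum_comm]
    simpa using hP1
  have huu : ∀ i, u i ⬝ᵥ u i = 1 := by
    intro i
    rw [dotProduct_sq_eq]
    rw [Finset.sum_congr rfl fun j _ => show u i j ^ 2 = margPmf K P i j by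
      simp [hudef, sqrtPmf, Real.sq_sqrt (hpos i j).le]]
    exact hmarg i
  have hupos' : ∀ i j, 0 < u i j := fun i j => by
    rw [hudef]; exact Real.sqrt_pos.2 (hpos i j)
  have hproj : ∀ i (x : Fin (K i) → ℝ),
      (projPmf K P i).mulVec x = x - (u i ⬝ᵥ x) • u i := by
    intro i x
    unfold projPmf
    rw [Matrix.sub_mulVec, Matrix.one_mulVec, vecMulVec_mulVec']
  have hperp : ∀ i (x : Fin (K i) → ℝ), ((projPmf K P i).mulVec x) ⬝ᵥ u i = 0 := by
    intro i x
    rw [hproj, sub_dotProduct, smul_dotProduct, huu i, smul_eq_mul, mul_one,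
      dotProduct_comm x (u i), sub_self]
  have hfix : ∀ i (x : Fin (K i) → ℝ), u i ⬝ᵥ x = 0 → (projPmf K P i).mulVec x = x := by
    intro i x hx; rw [hproj, hx]; simp
  have hnorm : ∀ i (x : Fin (K i) → ℝ), x ⬝ᵥ x ≤ 1 →
      ((projPmf K P i).mulVec x) ⬝ᵥ ((projPmf K P i).mulVec x) ≤ 1 := by
    intro i x hx
    rw [hproj]
    have hc : x ⬝ᵥ u i = u i ⬝ᵥ x := dotProduct_comm _ _
    simp only [sub_dotProduct, dotProduct_sub, dotProduct_smul, smul_dotProduct,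
      smul_eq_mul, huu i, hc, mul_one]
    nlinarith [sq_nonneg (u i ⬝ᵥ x)]
  have hsymm : ∀ i, (projPmf K P i)ᵀ = projPmf K P i := by
    intro i
    unfold projPmf
    rw [transpose_sub, transpose_one]
    congr 1
    funext j k
    simp [Matrix.transpose_apply, vecMulVec_apply, mul_comm]
  have hval : ∀ (i i' : Fin n) (b1 : Fin (K i) → ℝ) (b2 : Fin (K i') → ℝ),
      b1 ⬝ᵥ ((projPmf K P i * (Qpmf K P i i' - vecMulVec (u i) (u i')) * projPmf K P i').mulVec b2)
        = ((projPmf K P i).mulVec b1) ⬝ᵥ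
            ((Qpmf K P i i').mulVec ((projPmf K P i').mulVec b2)) := by
    intro i i' b1 b2
    rw [← Matrix.mulVec_mulVec, ← Matrix.mulVec_mulVec]
    rw [Matrix.dotProduct_mulVec]
    rw [show b1 ᵥ* projPmf K P i = (projPmf K P i) *ᵥ b1 by
      rw [← Matrix.mulVec_transpose, hsymm i]]
    rw [Matrix.sub_mulVec, vecMulVec_mulVec', dotProduct_sub, dotProduct_smul]
    rw [show u i' ⬝ᵥ ((projPmf K P i') *ᵥ b2) = 0 by
      rw [dotProduct_comm]; exact hperp i' b2]
    simp
  apply csSup_eq_csSup_of_forall_exists_le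
  · rintro r ⟨a, ha1, ha2, rfl⟩
    have hfixa : ∀ i, (projPmf K P i).mulVec (a i) = a i := by
      intro i
      refine hfix i (a i) ?_
      rw [dotProduct_comm]
      exact ha2 i
    refine ⟨_, ⟨a, ha1, rfl⟩, le_of_eq (Finset.sum_congr rfl fun e he => ?_)⟩
    rw [hval e.1 e.2, hfixa, hfixa]
  · rintro r ⟨b, hb1, rfl⟩
    set c : ∀ i, Fin (K i) → ℝ := fun i => (projPmf K P i).mulVec (b i) with hcdef
    obtain ⟨a, ha1, ha2, hle⟩ := exists_good K hK u huu hupos' (Qpmf K P) E hE c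
      (fun i => hnorm i (b i) (le_of_eq (by rw [dotProduct_sq_eq]; exact hb1 i)))
      (fun i => hperp i (b i))
    refine ⟨_, ⟨a, fun i => by rw [← dotProduct_sq_eq]; exact ha1 i,
      fun i => ha2 i, rfl⟩, ?_⟩
    calc ∑ e ∈ E, b e.1 ⬝ᵥ ((projPmf K P e.1 *
            (Qpmf K P e.1 e.2 - Matrix.vecMulVec (u e.1) (u e.2)) *
            projPmf K P e.2).mulVec (b e.2))
        = ∑ e ∈ E, c e.1 ⬝ᵥ (Qpmf K P e.1 e.2).mulVec (c e.2) :=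
          Finset.sum_congr rfl fun e he => hval e.1 e.2 (b e.1) (b e.2)
      _ ≤ _ := hle
end

section
/- Let K₁,…,Kₙ be positive integers, N = Σᵢ Kᵢ, and let C ∈ ℝ^{N×N} be a symmetric block matrix with blocks C_{i,i'} ∈ ℝ^{Kᵢ×K_{i'}} satisfying C_{i',i} = C_{i,i'}ᵀ and with zero diagonal blocks C_{i,i} = 0. For b = (b₁,…,bₙ) with bᵢ ∈ ℝ^{Kᵢ}, define r(b) = bᵀ C b and λᵢ(b) = Σ_{i'=1}^n bᵢᵀ C_{i,i'} b_{i'}. Suppose b̄ = (b̄₁,…,b̄ₙ) satisfies the multivariate eigenvalue equations Σ_{i'=1}^n C_{i,i'} b̄_{i'} = λᵢ b̄ᵢ with ‖b̄ᵢ‖₂ = 1 for all i, and suppose λ_{i₀}(b̄) < 0 for some index i₀. Define b̂ by b̂_{i₀} = −b̄_{i₀} and b̂_{i'} = b̄_{i'} for i' ≠ i₀. Then r(b̂) > r(b̄). -/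
open Matrix

lemma flip_sum {n : ℕ} (i₀ : Fin n) (f : Fin n → ℝ) :
    ∑ i, (if i = i₀ then (-1:ℝ) else 1) * f i = (∑ i, f i) - 2 * f i₀ := by
  have h : ∀ i : Fin n, (if i = i₀ then (-1:ℝ) else 1) * f i
      = f i - (if i = i₀ then 2 * f i₀ else 0) := by
    intro i; by_cases h : i = i₀ <;> simp [h] <;> ring
  rw [Finset.sum_congr rfl (fun i _ => h i), Finset.sum_sub_distrib,
    Finset.sum_ite_eq' Finset.univ i₀]
  simp

/-- At a solution of the multivariate eigenvalue problem with a negative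
Lagrange multiplier `λ_{i₀}(b̄) < 0`, flipping the sign of the block `b̄_{i₀}` strictly
increases the objective `r(b) = bᵀ C b`. -/
theorem mep_sign_flip_increases
    (n : ℕ) (K : Fin n → ℕ)
    (C : ∀ i i' : Fin n, Matrix (Fin (K i)) (Fin (K i')) ℝ)
    (hsym : ∀ i i', (C i i')ᵀ = C i' i)
    (hdiag : ∀ i, C i i = 0)
    (bbar : ∀ i, Fin (K i) → ℝ) (lam : Fin n → ℝ)
    (hMEP : ∀ i, ∑ i', (C i i').mulVec (bbar i') = lam i • bbar i)
    (hnorm : ∀ i, ∑ j, (bbar i j) ^ 2 = 1)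
    (i₀ : Fin n)
    (hneg : ∑ i', bbar i₀ ⬝ᵥ (C i₀ i').mulVec (bbar i') < 0)
    (bhat : ∀ i, Fin (K i) → ℝ)
    (hbhat₀ : bhat i₀ = -(bbar i₀))
    (hbhat : ∀ i, i ≠ i₀ → bhat i = bbar i) :
    (∑ i, ∑ i', bbar i ⬝ᵥ (C i i').mulVec (bbar i')) <
      (∑ i, ∑ i', bhat i ⬝ᵥ (C i i').mulVec (bhat i')) := by
  set T : Fin n → Fin n → ℝ := fun i i' => bbar i ⬝ᵥ (C i i').mulVec (bbar i') with hT
  have hT00 : T i₀ i₀ = 0 := by simp [hT, hdiag]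
  have hTsym : ∀ i i', T i' i = T i i' := by
    intro i i'
    simp only [hT]
    rw [← hsym i i', Matrix.dotProduct_mulVec, Matrix.vecMul_transpose,
      dotProduct_comm]
  have hsc : ∀ i, bhat i = (if i = i₀ then (-1:ℝ) else 1) • bbar i := by
    intro i
    by_cases h : i = i₀
    · subst h; simp [hbhat₀]
    · simp [h, hbhat i h]
  have hε : ∀ i i', bhat i ⬝ᵥ (C i i').mulVec (bhat i')
      = (if i = i₀ then (-1:ℝ) else 1) * ((if i' = i₀ then (-1:ℝ) else 1) * T i i') := by
    intro i i'
    rw [hsc i, hsc i']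
    by_cases h : i = i₀ <;> by_cases h' : i' = i₀ <;>
      simp [h, h', hT, Matrix.mulVec_neg, dotProduct_neg,
        neg_dotProduct] <;> subst_vars <;> rfl
  have hrow : ∀ i, ∑ i', bhat i ⬝ᵥ (C i i').mulVec (bhat i')
      = (if i = i₀ then (-1:ℝ) else 1) * ((∑ i', T i i') - 2 * T i i₀) := by
    intro i
    rw [Finset.sum_congr rfl (fun i' _ => hε i i'), ← Finset.mul_sum, flip_sum]
  have hcol : ∑ i, T i i₀ = ∑ i', T i₀ i' := Finset.sum_congr rfl fun i _ => hTsym i₀ i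
  have hnew : (∑ i, ∑ i', bhat i ⬝ᵥ (C i i').mulVec (bhat i'))
      = (∑ i, ∑ i', T i i') - 4 * (∑ i', T i₀ i') + 4 * T i₀ i₀ := by
    rw [Finset.sum_congr rfl (fun i _ => hrow i), flip_sum]
    rw [Finset.sum_sub_distrib, ← Finset.mul_sum, hcol]
    ring
  have hneg' : ∑ i', T i₀ i' < 0 := hneg
  rw [hnew, hT00]
  have hold : (∑ i, ∑ i', bbar i ⬝ᵥ (C i i').mulVec (bbar i')) = ∑ i, ∑ i', T i i' := rfl
  rw [hold]
  linarith
end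

section
/- Let K₁,…,Kₙ be positive integers, N = Σᵢ Kᵢ, and let C ∈ ℝ^{N×N} be a symmetric block matrix with blocks C_{i,i'} ∈ ℝ^{Kᵢ×K_{i'}} satisfying C_{i',i} = C_{i,i'}ᵀ and zero diagonal blocks. Consider the Gauss–Seidel iteration: given b^{(k)} with ‖bᵢ^{(k)}‖₂ = 1 for all i, for i = 1,…,n in order set b̃ᵢ^{(k)} = Σ_{i'<i} C_{i,i'} b_{i'}^{(k+1)} + Σ_{i'>i} C_{i,i'} b_{i'}^{(k)} and b_i^{(k+1)} = b̃ᵢ^{(k)} / ‖b̃ᵢ^{(k)}‖₂. Assume every intermediate vector b̃ᵢ^{(k)} is nonzero. Then the sequence r(b^{(k)}) = (b^{(k)})ᵀ C b^{(k)} is monotonically nondecreasing in k and converges. -/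
open Matrix

section Aux

variable {n : ℕ} {K : Fin n → ℕ}
variable (C : ∀ i i' : Fin n, Matrix (Fin (K i)) (Fin (K i')) ℝ)

/-- The objective function. -/
private def rr (x : ∀ i, Fin (K i) → ℝ) : ℝ :=
  ∑ i, ∑ i', x i ⬝ᵥ (C i i').mulVec (x i')

private lemma dot_sum {m : ℕ} (v : Fin m → ℝ) (s : Finset (Fin n))
    (f : Fin n → Fin m → ℝ) :
    v ⬝ᵥ ∑ i ∈ s, f i = ∑ i ∈ s, v ⬝ᵥ f i := by
  simp only [dotProduct, Finset.sum_apply, Finset.mul_sum]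
  exact Finset.sum_comm

private lemma rr_decomp
    (hsym : ∀ i i', (C i i')ᵀ = C i' i)
    (hdiag : ∀ i, C i i = 0)
    (x : ∀ i, Fin (K i) → ℝ) (i₀ : Fin n) :
    rr C x = (∑ i ∈ Finset.univ.erase i₀, ∑ i' ∈ Finset.univ.erase i₀,
        x i ⬝ᵥ (C i i').mulVec (x i')) +
      2 * (x i₀ ⬝ᵥ ∑ i' ∈ Finset.univ.erase i₀, (C i₀ i').mulVec (x i')) := by
  have hflip : ∀ i : Fin n, x i ⬝ᵥ (C i i₀).mulVec (x i₀)
      = x i₀ ⬝ᵥ (C i₀ i).mulVec (x i) := by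
    intro i
    rw [← hsym i₀ i, mulVec_transpose, dotProduct_comm, ← dotProduct_mulVec]
  have hsplit : ∀ (g : Fin n → ℝ), ∑ i, g i = g i₀ + ∑ i ∈ Finset.univ.erase i₀, g i :=
    fun g => (Finset.add_sum_erase _ g (Finset.mem_univ i₀)).symm
  rw [rr, hsplit, hsplit fun i' => x i₀ ⬝ᵥ (C i₀ i').mulVec (x i')]
  rw [Finset.sum_congr rfl (fun i _ => hsplit fun i' => x i ⬝ᵥ (C i i').mulVec (x i'))]
  rw [Finset.sum_add_distrib]
  rw [Finset.sum_congr rfl (fun i _ => hflip i), ← dot_sum, hdiag]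
  simp only [zero_mulVec, mulVec_zero, dotProduct_zero, zero_add, dot_sum]
  ring

/-- Key inequality-precursor: if `x` and `y` agree off `i₀`, the difference of objectives. -/
private lemma rr_diff
    (hsym : ∀ i i', (C i i')ᵀ = C i' i)
    (hdiag : ∀ i, C i i = 0)
    (x y : ∀ i, Fin (K i) → ℝ) (i₀ : Fin n)
    (hxy : ∀ i, i ≠ i₀ → x i = y i) :
    rr C y - rr C x =
      2 * ((y i₀ - x i₀) ⬝ᵥ ∑ i' ∈ Finset.univ.erase i₀, (C i₀ i').mulVec (x i')) := by
  rw [rr_decomp C hsym hdiag x i₀, rr_decomp C hsym hdiag y i₀]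
  have h1 : ∀ i ∈ Finset.univ.erase i₀, y i = x i := by
    intro i hi
    exact (hxy i (Finset.ne_of_mem_erase hi)).symm
  have h2 : (∑ i' ∈ Finset.univ.erase i₀, (C i₀ i').mulVec (y i'))
      = ∑ i' ∈ Finset.univ.erase i₀, (C i₀ i').mulVec (x i') :=
    Finset.sum_congr rfl fun i hi => by rw [h1 i hi]
  have h3 : (∑ i ∈ Finset.univ.erase i₀, ∑ i' ∈ Finset.univ.erase i₀,
        y i ⬝ᵥ (C i i').mulVec (y i'))
      = ∑ i ∈ Finset.univ.erase i₀, ∑ i' ∈ Finset.univ.erase i₀,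
        x i ⬝ᵥ (C i i').mulVec (x i') :=
    Finset.sum_congr rfl fun i hi => Finset.sum_congr rfl fun i' hi' => by
      rw [h1 i hi, h1 i' hi']
  rw [h2, h3, sub_dotProduct]
  ring

end Aux

/-- The objective values `r(b^{(k)}) = (b^{(k)})ᵀ C b^{(k)}` produced by the
Gauss–Seidel iteration for the multivariate eigenvalue problem are monotonically
nondecreasing and convergent. -/
theorem gauss_seidel_monotone_convergent
    (n : ℕ) (K : Fin n → ℕ)
    (C : ∀ i i' : Fin n, Matrix (Fin (K i)) (Fin (K i')) ℝ)
    (hsym : ∀ i i', (C i i')ᵀ = C i' i)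
    (hdiag : ∀ i, C i i = 0)
    (b : ℕ → ∀ i, Fin (K i) → ℝ)
    (btil : ℕ → ∀ i, Fin (K i) → ℝ)
    (hinit : ∀ i, ∑ j, (b 0 i j) ^ 2 = 1)
    (hbtil : ∀ k i, btil k i =
      (∑ i' ∈ Finset.univ.filter (fun i' => i' < i), (C i i').mulVec (b (k + 1) i')) +
      (∑ i' ∈ Finset.univ.filter (fun i' => i < i'), (C i i').mulVec (b k i')))
    (hne : ∀ k i, btil k i ≠ 0)
    (hupd : ∀ k i, b (k + 1) i = (Real.sqrt (∑ j, (btil k i j) ^ 2))⁻¹ • btil k i) :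
    Monotone (fun k => ∑ i, ∑ i', b k i ⬝ᵥ (C i i').mulVec (b k i')) ∧
    ∃ L : ℝ, Filter.Tendsto (fun k => ∑ i, ∑ i', b k i ⬝ᵥ (C i i').mulVec (b k i'))
      Filter.atTop (nhds L) := by
  -- positivity of the normalizing constant
  have hspos : ∀ k i, 0 < Real.sqrt (∑ j, (btil k i j) ^ 2) := by
    intro k i
    apply Real.sqrt_pos.2
    have : ∃ j, btil k i j ≠ 0 := by
      by_contra h
      push_neg at h
      exact hne k i (funext h)
    obtain ⟨j, hj⟩ := this
    exact Finset.sum_pos' (fun j _ => sq_nonneg _)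
      ⟨j, Finset.mem_univ j, by positivity⟩
  have hsq : ∀ k i, (Real.sqrt (∑ j, (btil k i j) ^ 2)) ^ 2 = ∑ j, (btil k i j) ^ 2 := by
    intro k i
    exact Real.sq_sqrt (Finset.sum_nonneg fun j _ => sq_nonneg _)
  -- all iterates stay on the unit sphere
  have hunit : ∀ k i, ∑ j, (b k i j) ^ 2 = 1 := by
    intro k
    induction k with
    | zero => exact hinit
    | succ k _ =>
      intro i
      rw [hupd k i]
      simp only [Pi.smul_apply, smul_eq_mul, mul_pow]
      have hS0 : (0:ℝ) ≤ ∑ j, (btil k i j) ^ 2 := Finset.sum_nonneg fun j _ => sq_nonneg _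
      have hSpos : (0:ℝ) < ∑ j, (btil k i j) ^ 2 := by
        rw [← hsq k i]; exact pow_pos (hspos k i) 2
      rw [← Finset.mul_sum, inv_pow, Real.sq_sqrt hS0]
      exact inv_mul_cancel₀ hSpos.ne'
  -- each coordinate has absolute value ≤ 1
  have habs : ∀ k i j, |b k i j| ≤ 1 := by
    intro k i j
    have h1 : (b k i j) ^ 2 ≤ 1 := by
      rw [← hunit k i]
      exact Finset.single_le_sum (f := fun j => (b k i j) ^ 2)
        (fun j _ => sq_nonneg _) (Finset.mem_univ j)
    nlinarith [abs_nonneg (b k i j), sq_abs (b k i j)]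
  -- the interpolating sequence within a sweep
  set c : ℕ → ℕ → ∀ i, Fin (K i) → ℝ :=
    fun k m i => if (i : ℕ) < m then b (k + 1) i else b k i with hc
  have hc0 : ∀ k, c k 0 = b k := by
    intro k; funext i; simp [hc]
  have hcn : ∀ k, c k n = b (k + 1) := by
    intro k; funext i; simp [hc, i.isLt]
  -- one coordinate update does not decrease the objective
  have hstep : ∀ k m, rr C (c k m) ≤ rr C (c k (m + 1)) := by
    intro k m
    by_cases hm : m < n
    · set i₀ : Fin n := ⟨m, hm⟩ with hi₀
      have hagree : ∀ i, i ≠ i₀ → c k m i = c k (m + 1) i := by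
        intro i hi
        have : (i : ℕ) ≠ m := fun h => hi (Fin.ext h)
        simp only [hc]
        rcases lt_or_gt_of_ne this with h | h
        · simp [h, Nat.lt_succ_of_lt h]
        · have h1 : ¬ (i : ℕ) < m := by omega
          have h2 : ¬ (i : ℕ) < m + 1 := by omega
          simp [h1, h2]
      -- the relevant linear form is btil k i₀
      have hT : (∑ i' ∈ Finset.univ.erase i₀, (C i₀ i').mulVec (c k m i')) = btil k i₀ := by
        rw [hbtil k i₀]
        have hsplit : Finset.univ.erase i₀ =
            (Finset.univ.filter (fun i' => i' < i₀)) ∪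
            (Finset.univ.filter (fun i' => i₀ < i')) := by
          ext i
          simp only [Finset.mem_erase, Finset.mem_univ, Finset.mem_union, Finset.mem_filter,
            true_and, and_true]
          constructor
          · intro h; exact lt_or_gt_of_ne h
          · intro h; rcases h with h | h
            · exact ne_of_lt h
            · exact ne_of_gt h
        have hdisj : Disjoint (Finset.univ.filter (fun i' => i' < i₀))
            (Finset.univ.filter (fun i' => i₀ < i')) := by
          rw [Finset.disjoint_filter]
          intro i _ h1 h2
          exact absurd (h1.trans h2) (lt_irrefl i)
        rw [hsplit, Finset.sum_union hdisj]
        congr 1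
        · apply Finset.sum_congr rfl
          intro i hi
          simp only [Finset.mem_filter] at hi
          have : (i : ℕ) < m := hi.2
          simp [hc, this]
        · apply Finset.sum_congr rfl
          intro i hi
          simp only [Finset.mem_filter] at hi
          have : ¬ (i : ℕ) < m := by
            have : m < (i : ℕ) := hi.2
            omega
          simp [hc, this]
      have hxi : c k m i₀ = b k i₀ := by simp [hc, hi₀]
      have hyi : c k (m + 1) i₀ = b (k + 1) i₀ := by simp [hc, hi₀]
      have hdiff := rr_diff C hsym hdiag (c k m) (c k (m + 1)) i₀
        (fun i hi => hagree i hi)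
      rw [hT, hxi, hyi] at hdiff
      -- now show the dot-product difference is nonnegative
      have hnew : b (k + 1) i₀ ⬝ᵥ btil k i₀ = Real.sqrt (∑ j, (btil k i₀ j) ^ 2) := by
        rw [hupd k i₀]
        simp only [dotProduct, Pi.smul_apply, smul_eq_mul]
        simp_rw [mul_assoc, ← pow_two]
        have hS0 : (0:ℝ) ≤ ∑ j, (btil k i₀ j) ^ 2 := Finset.sum_nonneg fun j _ => sq_nonneg _
        rw [← Finset.mul_sum, inv_mul_eq_div, div_eq_iff (hspos k i₀).ne',
          Real.mul_self_sqrt hS0]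
      have hold : b k i₀ ⬝ᵥ btil k i₀ ≤ Real.sqrt (∑ j, (btil k i₀ j) ^ 2) := by
        have hcs := Finset.sum_mul_sq_le_sq_mul_sq Finset.univ (b k i₀) (btil k i₀)
        rw [hunit k i₀, one_mul] at hcs
        have h1 : (b k i₀ ⬝ᵥ btil k i₀) ^ 2 ≤ ∑ j, (btil k i₀ j) ^ 2 := hcs
        have h2 := hsq k i₀
        nlinarith [hspos k i₀, abs_nonneg (b k i₀ ⬝ᵥ btil k i₀),
          sq_abs (b k i₀ ⬝ᵥ btil k i₀), le_abs_self (b k i₀ ⬝ᵥ btil k i₀)]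
      have : 0 ≤ rr C (c k (m + 1)) - rr C (c k m) := by
        rw [hdiff, sub_dotProduct]
        have := sub_nonneg.2 (hold.trans_eq hnew.symm)
        linarith
      linarith
    · have : c k m = c k (m + 1) := by
        funext i
        have h1 : (i : ℕ) < m := lt_of_lt_of_le i.isLt (le_of_not_gt hm)
        simp [hc, h1, Nat.lt_succ_of_lt h1]
      rw [this]
  have hsweep : ∀ k, rr C (b k) ≤ rr C (b (k + 1)) := by
    intro k
    have h : ∀ m, rr C (c k 0) ≤ rr C (c k m) := by
      intro m
      induction m with
      | zero => exact le_rfl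
      | succ m ih => exact ih.trans (hstep k m)
    have := h n
    rwa [hc0, hcn] at this
  have hmono : Monotone (fun k => ∑ i, ∑ i', b k i ⬝ᵥ (C i i').mulVec (b k i')) :=
    monotone_nat_of_le_succ hsweep
  refine ⟨hmono, ?_⟩
  -- boundedness
  have hbdd : ∀ k, rr C (b k) ≤ ∑ i, ∑ i', ∑ j, ∑ j', |C i i' j j'| := by
    intro k
    apply Finset.sum_le_sum
    intro i _
    apply Finset.sum_le_sum
    intro i' _
    calc b k i ⬝ᵥ (C i i').mulVec (b k i')
        = ∑ j, ∑ j', b k i j * (C i i' j j' * b k i' j') := by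
          simp [dotProduct, mulVec, Finset.mul_sum]
      _ ≤ ∑ j, ∑ j', |C i i' j j'| := by
          apply Finset.sum_le_sum
          intro j _
          apply Finset.sum_le_sum
          intro j' _
          calc b k i j * (C i i' j j' * b k i' j')
              ≤ |b k i j * (C i i' j j' * b k i' j')| := le_abs_self _
            _ = |b k i j| * |C i i' j j'| * |b k i' j'| := by
                rw [abs_mul, abs_mul]; ring
            _ ≤ 1 * |C i i' j j'| * 1 := by
                apply mul_le_mul (mul_le_mul (habs k i j) le_rfl (abs_nonneg _) zero_le_one)
                  (habs k i' j') (abs_nonneg _)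
                positivity
            _ = |C i i' j j'| := by ring
  have hbddAbove : BddAbove (Set.range fun k => ∑ i, ∑ i', b k i ⬝ᵥ (C i i').mulVec (b k i')) := by
    refine ⟨∑ i, ∑ i', ∑ j, ∑ j', |C i i' j j'|, ?_⟩
    rintro x ⟨k, rfl⟩
    exact hbdd k
  exact ⟨_, tendsto_atTop_ciSup hmono hbddAbove⟩
end

section
/- Let X₁,…,Xₙ be finite discrete random variables and G=(V,E) a finite simple graph on {1,…,n} whose network maximal correlation ρ_G is attained by functions φᵢ* with E[φᵢ*(Xᵢ)·φ_{i'}*(X_{i'})] ≥ 0 for every edge (i,i') ∈ E. Let a random k-partition π = {V₁,…,V_M} of V be drawn from an (ε,k)-partitioning of G, i.e., a probability distribution over k-partitions such that for every edge e ∈ E the probability that e does not lie inside some part is at most ε. For each part V_m let ρ_{G_m} denote the NMC of the induced subgraph G_m = (V_m, E ∩ (V_m × V_m)), and set ρ̂_G = Σ_{m=1}^M ρ_{G_m}. Then E[ρ̂_G] ≥ (1−ε)·ρ_G, where the expectation is over the random partition. -/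
open MeasureTheory

/-- The network maximal correlation of the finite discrete random variables `X` over the
edge set `F` (feasibility constraints are imposed on all node variables). -/
noncomputable def nmcOf {Ω : Type*} [MeasurableSpace Ω] (μ : Measure Ω)
    {n : ℕ} {K : Fin n → ℕ} (X : ∀ i, Ω → Fin (K i))
    (F : Finset (Fin n × Fin n)) : ℝ :=
  sSup {r : ℝ | ∃ φ : ∀ i, Fin (K i) → ℝ,
    (∀ i, (∫ ω, φ i (X i ω) ∂μ) = 0) ∧
    (∀ i, (∫ ω, (φ i (X i ω)) ^ 2 ∂μ) = 1) ∧
    r = ∑ e ∈ F, ∫ ω, φ e.1 (X e.1 ω) * φ e.2 (X e.2 ω) ∂μ}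

lemma int_comp {Ω : Type*} [MeasurableSpace Ω] (μ : Measure Ω) [IsFiniteMeasure μ]
    {ι : Type*} [Fintype ι] [MeasurableSpace ι] [MeasurableSingletonClass ι]
    {X : Ω → ι} (hX : Measurable X) (ψ : ι → ℝ) :
    Integrable (fun ω => ψ (X ω)) μ := by
  have hm : Measurable fun ω => ψ (X ω) := (Measurable.of_discrete (f := ψ)).comp hX
  refine (integrable_const ((Finset.univ.sup fun x => ‖ψ x‖₊ : NNReal) : ℝ)).mono'
    hm.aestronglyMeasurable ?_
  filter_upwards with ω
  have : ‖ψ (X ω)‖₊ ≤ Finset.univ.sup fun x => ‖ψ x‖₊ :=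
    Finset.le_sup (f := fun x => ‖ψ x‖₊) (Finset.mem_univ (X ω))
  simpa [← NNReal.coe_le_coe, Real.norm_eq_abs] using this

lemma edge_bound {Ω : Type*} [MeasurableSpace Ω] (μ : Measure Ω) [IsProbabilityMeasure μ]
    {a b : ℕ} {X1 : Ω → Fin a} {X2 : Ω → Fin b}
    (h1 : Measurable X1) (h2 : Measurable X2) (ψ1 : Fin a → ℝ) (ψ2 : Fin b → ℝ)
    (hv1 : (∫ ω, (ψ1 (X1 ω)) ^ 2 ∂μ) = 1) (hv2 : (∫ ω, (ψ2 (X2 ω)) ^ 2 ∂μ) = 1) :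
    (∫ ω, ψ1 (X1 ω) * ψ2 (X2 ω) ∂μ) ≤ 1 := by
  have if2 : Integrable (fun ω => (ψ1 (X1 ω)) ^ 2) μ := int_comp μ h1 (fun x => ψ1 x ^ 2)
  have ig2 : Integrable (fun ω => (ψ2 (X2 ω)) ^ 2) μ := int_comp μ h2 (fun x => ψ2 x ^ 2)
  have ifg : Integrable (fun ω => ψ1 (X1 ω) * ψ2 (X2 ω)) μ :=
    int_comp μ (h1.prodMk h2) (fun p => ψ1 p.1 * ψ2 p.2)
  have hpt : ∀ ω, ψ1 (X1 ω) * ψ2 (X2 ω) ≤ ((ψ1 (X1 ω)) ^ 2 + (ψ2 (X2 ω)) ^ 2) / 2 := by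
    intro ω; nlinarith [sq_nonneg (ψ1 (X1 ω) - ψ2 (X2 ω))]
  calc (∫ ω, ψ1 (X1 ω) * ψ2 (X2 ω) ∂μ)
      ≤ ∫ ω, ((ψ1 (X1 ω)) ^ 2 + (ψ2 (X2 ω)) ^ 2) / 2 ∂μ :=
        integral_mono ifg ((if2.add ig2).div_const 2) hpt
    _ = 1 := by rw [integral_div, integral_add if2 ig2, hv1, hv2]; norm_num

/-- If the NMC of `G` is attained with nonnegative edge correlations, and a
random `k`-partition (encoded by a labeling `lab`, whose parts are the fibers of the labels,
each with at most `k` elements) cuts each edge with probability at most `ε`, then the expected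
sum of the NMCs of the induced subgraphs is at least `(1−ε)·ρ_G`. -/
theorem expected_partitioned_nmc_ge
    {Ω Θ : Type*} [MeasurableSpace Ω] [MeasurableSpace Θ]
    (μ : Measure Ω) [IsProbabilityMeasure μ]
    (ν : Measure Θ) [IsProbabilityMeasure ν]
    (n : ℕ) (K : Fin n → ℕ)
    (X : ∀ i, Ω → Fin (K i)) (hX : ∀ i, Measurable (X i))
    (E : Finset (Fin n × Fin n)) (hE : ∀ e ∈ E, e.1 ≠ e.2)
    (φstar : ∀ i, Fin (K i) → ℝ)
    (hmean : ∀ i, (∫ ω, φstar i (X i ω) ∂μ) = 0)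
    (hvar : ∀ i, (∫ ω, (φstar i (X i ω)) ^ 2 ∂μ) = 1)
    (hattain : (∑ e ∈ E, ∫ ω, φstar e.1 (X e.1 ω) * φstar e.2 (X e.2 ω) ∂μ) = nmcOf μ X E)
    (hnonneg : ∀ e ∈ E, 0 ≤ ∫ ω, φstar e.1 (X e.1 ω) * φstar e.2 (X e.2 ω) ∂μ)
    (k : ℕ) (ε : ℝ) (hε : 0 ≤ ε)
    (lab : Θ → Fin n → Fin n) (hlab : Measurable lab)
    (hsize : ∀ θ (m : Fin n), (Finset.univ.filter (fun i => lab θ i = m)).card ≤ k)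
    (hcut : ∀ e ∈ E, (ν {θ | lab θ e.1 ≠ lab θ e.2}).toReal ≤ ε) :
    (1 - ε) * nmcOf μ X E ≤
      ∫ θ, (∑ m : Fin n,
        nmcOf μ X (E.filter (fun e => lab θ e.1 = m ∧ lab θ e.2 = m))) ∂ν := by
  classical
  set c : Fin n × Fin n → ℝ :=
    fun e => ∫ ω, φstar e.1 (X e.1 ω) * φstar e.2 (X e.2 ω) ∂μ with hc
  -- nmc is bounded above and attained from below with φstar
  have hkey : ∀ F : Finset (Fin n × Fin n), (∑ e ∈ F, c e) ≤ nmcOf μ X F := by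
    intro F
    apply le_csSup
    · refine ⟨(F.card : ℝ), ?_⟩
      rintro r ⟨φ, hm, hv, rfl⟩
      calc (∑ e ∈ F, ∫ ω, φ e.1 (X e.1 ω) * φ e.2 (X e.2 ω) ∂μ)
          ≤ ∑ e ∈ F, (1 : ℝ) := Finset.sum_le_sum fun e _ =>
            edge_bound μ (hX e.1) (hX e.2) (φ e.1) (φ e.2) (hv e.1) (hv e.2)
        _ = F.card := by simp
    · exact ⟨φstar, hmean, hvar, rfl⟩
  -- cut-indicator lower bound function
  set g : Θ → ℝ := fun θ => ∑ e ∈ E, if lab θ e.1 = lab θ e.2 then c e else 0 with hg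
  set f : Θ → ℝ := fun θ => ∑ m : Fin n,
      nmcOf μ X (E.filter (fun e => lab θ e.1 = m ∧ lab θ e.2 = m)) with hf
  have hpt : ∀ θ, g θ ≤ f θ := by
    intro θ
    have : g θ = ∑ m : Fin n, ∑ e ∈ E.filter (fun e => lab θ e.1 = m ∧ lab θ e.2 = m), c e := by
      simp only [hg, Finset.sum_filter]
      rw [Finset.sum_comm]
      refine Finset.sum_congr rfl fun e _ => ?_
      by_cases h : lab θ e.1 = lab θ e.2
      · rw [if_pos h, Finset.sum_eq_single (lab θ e.1)]
        · simp [h]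
        · intro m _ hm; simp [Ne.symm hm]
        · simp
      · rw [if_neg h]
        refine (Finset.sum_eq_zero fun m _ => ?_).symm
        rw [if_neg]; rintro ⟨h1, h2⟩; exact h (h1.trans h2.symm)
    rw [this]
    exact Finset.sum_le_sum fun m _ => hkey _
  -- integrability of f and g as functions of lab θ
  have hintf : Integrable f ν := by
    have := int_comp ν hlab (fun v : Fin n → Fin n => ∑ m : Fin n,
      nmcOf μ X (E.filter (fun e => v e.1 = m ∧ v e.2 = m)))
    exact this
  have hintg : Integrable g ν := by
    have := int_comp ν hlab (fun v : Fin n → Fin n =>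
      ∑ e ∈ E, if v e.1 = v e.2 then c e else 0)
    exact this
  -- measurable cut sets
  have hlabi : ∀ i : Fin n, Measurable fun θ => lab θ i :=
    fun i => (measurable_pi_apply i).comp hlab
  have hA : ∀ e : Fin n × Fin n, MeasurableSet {θ | lab θ e.1 = lab θ e.2} := by
    intro e
    exact measurableSet_eq_fun (hlabi e.1) (hlabi e.2)
  -- compute integral of g
  have hIg : (∫ θ, g θ ∂ν) = ∑ e ∈ E, c e * (ν {θ | lab θ e.1 = lab θ e.2}).toReal := by
    rw [hg, integral_finset_sum]
    · refine Finset.sum_congr rfl fun e _ => ?_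
      have : (fun θ => if lab θ e.1 = lab θ e.2 then c e else 0)
          = Set.indicator {θ | lab θ e.1 = lab θ e.2} (fun _ => c e) := by
        ext θ; simp [Set.indicator_apply]
      rw [this, integral_indicator_const _ (hA e)]
      simp [mul_comm, measureReal_def]
    · intro e _
      exact int_comp ν hlab (fun v : Fin n → Fin n => if v e.1 = v e.2 then c e else 0)
  have hmeas1 : ∀ e ∈ E, 1 - ε ≤ (ν {θ | lab θ e.1 = lab θ e.2}).toReal := by
    intro e he
    have hcompl : {θ | lab θ e.1 ≠ lab θ e.2} = {θ | lab θ e.1 = lab θ e.2}ᶜ := by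
      ext θ; simp [Set.mem_compl_iff]
    have hsum : (ν {θ | lab θ e.1 = lab θ e.2}).toReal
        + (ν {θ | lab θ e.1 = lab θ e.2}ᶜ).toReal = 1 := by
      rw [← ENNReal.toReal_add (measure_ne_top _ _) (measure_ne_top _ _),
        measure_add_measure_compl (hA e)]
      simp
    have := hcut e he
    rw [hcompl] at this
    linarith
  have hle1 : ∀ e : Fin n × Fin n, (ν {θ | lab θ e.1 = lab θ e.2}).toReal ≤ 1 := by
    intro e
    exact ENNReal.toReal_le_of_le_ofReal zero_le_one (by simpa using prob_le_one)
  calc (1 - ε) * nmcOf μ X E = (1 - ε) * ∑ e ∈ E, c e := by rw [← hattain]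
    _ = ∑ e ∈ E, c e * (1 - ε) := by rw [Finset.mul_sum]; exact Finset.sum_congr rfl fun e _ => mul_comm _ _
      
    _ ≤ ∑ e ∈ E, c e * (ν {θ | lab θ e.1 = lab θ e.2}).toReal := by
        refine Finset.sum_le_sum fun e he => ?_
        exact mul_le_mul_of_nonneg_left (hmeas1 e he) (hnonneg e he)
    _ = ∫ θ, g θ ∂ν := hIg.symm
    _ ≤ ∫ θ, f θ ∂ν := integral_mono hintg hintf hpt
end

section
/- Let X₁,…,Xₙ be finite discrete random variables with alphabets 𝒳ᵢ of size at most K (and |𝒳ᵢ| ≥ 2), let 𝒦 = Kⁿ, and let G=(V,E) be a finite simple graph on {1,…,n}. Let P and P̃ be two joint pmfs on 𝒳₁×⋯×𝒳ₙ, each with all marginal probabilities strictly positive, and let δ = min over i of the minimum over both P and P̃ of the smallest marginal probability of Xᵢ. Let ρ_G and ρ̃_G denote the network maximal correlations computed under P and P̃ respectively. If max over joint outcomes x of |P(x) − P̃(x)| ≤ γ and γ ≤ δ^{3/2}·𝒦^{-1}, then |ρ_G − ρ̃_G| ≤ 8·γ·𝒦·|E| / δ². -/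
/-- The network maximal correlation of the joint pmf `P` over the edge set `E`,
in the finite-dimensional (vector) formulation. -/
noncomputable def nmcPmf {n : ℕ} (K : Fin n → ℕ) (P : (∀ i, Fin (K i)) → ℝ)
    (E : Finset (Fin n × Fin n)) : ℝ :=
  sSup {r : ℝ | ∃ a : ∀ i, Fin (K i) → ℝ,
    (∀ i, ∑ j, (a i j) ^ 2 = 1) ∧
    (∀ i, ∑ j, a i j * Real.sqrt (margPmf K P i j) = 0) ∧
    r = ∑ e ∈ E, ∑ j, ∑ j',
      a e.1 j *
        (pairPmf K P e.1 e.2 j j' /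
          Real.sqrt (margPmf K P e.1 j * margPmf K P e.2 j')) *
      a e.2 j'}

section Aux
variable {n : ℕ} {K : Fin n → ℕ}

lemma marg_nonneg (P : (∀ i, Fin (K i)) → ℝ) (hP0 : ∀ x, 0 ≤ P x) (i : Fin n) (j : Fin (K i)) :
    0 ≤ margPmf K P i j :=
  Finset.sum_nonneg fun x _ => by split <;> simp [hP0 x]

lemma marg_sum (P : (∀ i, Fin (K i)) → ℝ) (hP1 : ∑ x, P x = 1) (i : Fin n) :
    ∑ j, margPmf K P i j = 1 := by
  unfold margPmf
  rw [Finset.sum_comm]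
  simpa using hP1

lemma marg_le_one (P : (∀ i, Fin (K i)) → ℝ) (hP0 : ∀ x, 0 ≤ P x) (hP1 : ∑ x, P x = 1)
    (i : Fin n) (j : Fin (K i)) : margPmf K P i j ≤ 1 := by
  rw [← marg_sum P hP1 i]
  exact Finset.single_le_sum (fun j' _ => marg_nonneg P hP0 i j') (Finset.mem_univ j)

lemma pair_nonneg (P : (∀ i, Fin (K i)) → ℝ) (hP0 : ∀ x, 0 ≤ P x) (i i' : Fin n)
    (j : Fin (K i)) (j' : Fin (K i')) : 0 ≤ pairPmf K P i i' j j' :=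
  Finset.sum_nonneg fun x _ => by split <;> simp [hP0 x]

lemma pair_le_left (P : (∀ i, Fin (K i)) → ℝ) (hP0 : ∀ x, 0 ≤ P x) (i i' : Fin n)
    (j : Fin (K i)) (j' : Fin (K i')) : pairPmf K P i i' j j' ≤ margPmf K P i j := by
  refine Finset.sum_le_sum fun x _ => ?_
  split_ifs with h1 h2 <;> first | exact le_rfl | exact hP0 x | exact (h2 h1.1).elim

lemma pair_le_right (P : (∀ i, Fin (K i)) → ℝ) (hP0 : ∀ x, 0 ≤ P x) (i i' : Fin n)
    (j : Fin (K i)) (j' : Fin (K i')) : pairPmf K P i i' j j' ≤ margPmf K P i' j' := by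
  refine Finset.sum_le_sum fun x _ => ?_
  split_ifs with h1 h2 <;> first | exact le_rfl | exact hP0 x | exact (h2 h1.2).elim
end Aux

section Aux2
variable {n : ℕ} {K : Fin n → ℕ}

lemma marg_absdiff_sum (P Pt : (∀ i, Fin (K i)) → ℝ) (γ : ℝ)
    (hγ : ∀ x, |P x - Pt x| ≤ γ) (i : Fin n) :
    ∑ j, |margPmf K P i j - margPmf K Pt i j|
      ≤ γ * (Fintype.card (∀ i, Fin (K i)) : ℝ) := by
  have h1 : ∀ j : Fin (K i), |margPmf K P i j - margPmf K Pt i j|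
      ≤ ∑ x : ∀ i, Fin (K i), if x i = j then |P x - Pt x| else 0 := by
    intro j
    unfold margPmf
    rw [← Finset.sum_sub_distrib]
    refine (Finset.abs_sum_le_sum_abs _ _).trans ?_
    refine Finset.sum_le_sum fun x _ => ?_
    split_ifs <;> simp
  calc ∑ j, |margPmf K P i j - margPmf K Pt i j|
      ≤ ∑ j, ∑ x : ∀ i, Fin (K i), if x i = j then |P x - Pt x| else 0 :=
        Finset.sum_le_sum fun j _ => h1 j
    _ = ∑ x : ∀ i, Fin (K i), |P x - Pt x| := by
        rw [Finset.sum_comm]; simp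
    _ ≤ ∑ _x : ∀ i, Fin (K i), γ := Finset.sum_le_sum fun x _ => hγ x
    _ = γ * (Fintype.card (∀ i, Fin (K i)) : ℝ) := by
        simp [mul_comm]

lemma pair_absdiff_sum (P Pt : (∀ i, Fin (K i)) → ℝ) (γ : ℝ)
    (hγ : ∀ x, |P x - Pt x| ≤ γ) (i i' : Fin n) :
    ∑ j, ∑ j', |pairPmf K P i i' j j' - pairPmf K Pt i i' j j'|
      ≤ γ * (Fintype.card (∀ i, Fin (K i)) : ℝ) := by
  have h1 : ∀ (j : Fin (K i)) (j' : Fin (K i')),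
      |pairPmf K P i i' j j' - pairPmf K Pt i i' j j'|
      ≤ ∑ x : ∀ i, Fin (K i), if x i = j ∧ x i' = j' then |P x - Pt x| else 0 := by
    intro j j'
    unfold pairPmf
    rw [← Finset.sum_sub_distrib]
    refine (Finset.abs_sum_le_sum_abs _ _).trans ?_
    refine Finset.sum_le_sum fun x _ => ?_
    split_ifs <;> simp
  calc ∑ j, ∑ j', |pairPmf K P i i' j j' - pairPmf K Pt i i' j j'|
      ≤ ∑ j, ∑ j', ∑ x : ∀ i, Fin (K i), if x i = j ∧ x i' = j' then |P x - Pt x| else 0 :=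
        Finset.sum_le_sum fun j _ => Finset.sum_le_sum fun j' _ => h1 j j'
    _ = ∑ x : ∀ i, Fin (K i), |P x - Pt x| := by
        have h2 : ∀ j : Fin (K i),
            (∑ j', ∑ x : ∀ i, Fin (K i), if x i = j ∧ x i' = j' then |P x - Pt x| else 0)
            = ∑ x : ∀ i, Fin (K i), if x i = j then |P x - Pt x| else 0 := by
          intro j
          rw [Finset.sum_comm]
          refine Finset.sum_congr rfl fun x _ => ?_
          simp [ite_and]
        simp_rw [h2]
        rw [Finset.sum_comm]
        simp
    _ ≤ ∑ _x : ∀ i, Fin (K i), γ := Finset.sum_le_sum fun x _ => hγ x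
    _ = γ * (Fintype.card (∀ i, Fin (K i)) : ℝ) := by
        simp [mul_comm]

lemma abs_sqrt_sub_sqrt (u v d : ℝ) (hd : 0 < d) (hu0 : 0 ≤ u) (hv0 : 0 ≤ v)
    (hu : d ≤ Real.sqrt u) (hv : d ≤ Real.sqrt v) :
    |Real.sqrt u - Real.sqrt v| ≤ |u - v| / (2 * d) := by
  have key : |Real.sqrt u - Real.sqrt v| * (Real.sqrt u + Real.sqrt v) = |u - v| := by
    rw [← abs_of_nonneg (by positivity : (0:ℝ) ≤ Real.sqrt u + Real.sqrt v), ← abs_mul]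
    congr 1
    have h1 := Real.sq_sqrt hu0
    have h2 := Real.sq_sqrt hv0
    nlinarith [Real.sq_sqrt hu0, Real.sq_sqrt hv0]
  rw [le_div_iff₀ (by positivity)]
  calc |Real.sqrt u - Real.sqrt v| * (2 * d)
      ≤ |Real.sqrt u - Real.sqrt v| * (Real.sqrt u + Real.sqrt v) :=
        mul_le_mul_of_nonneg_left (by linarith) (abs_nonneg _)
    _ = |u - v| := key
end Aux2

section Aux3
variable {n : ℕ} {K : Fin n → ℕ}

lemma Q_entry_diff (p pt u v δ : ℝ) (hδ : 0 < δ) (hp0 : 0 ≤ p) (hpt0 : 0 ≤ pt)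
    (hu : δ^2 ≤ u) (hv : δ^2 ≤ v) (hptv : pt^2 ≤ v) :
    |p / Real.sqrt u - pt / Real.sqrt v| ≤ |p - pt| / δ + |u - v| / (2 * δ^2) := by
  have hu0 : (0:ℝ) ≤ u := le_trans (by positivity) hu
  have hv0 : (0:ℝ) ≤ v := le_trans (by positivity) hv
  have hsu : δ ≤ Real.sqrt u := by
    have := Real.sqrt_le_sqrt hu
    rwa [Real.sqrt_sq hδ.le] at this
  have hsv : δ ≤ Real.sqrt v := by
    have := Real.sqrt_le_sqrt hv
    rwa [Real.sqrt_sq hδ.le] at this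
  have hsupos : 0 < Real.sqrt u := lt_of_lt_of_le hδ hsu
  have hsvpos : 0 < Real.sqrt v := lt_of_lt_of_le hδ hsv
  have hptsv : pt ≤ Real.sqrt v := by
    have := Real.sqrt_le_sqrt hptv
    rwa [Real.sqrt_sq hpt0] at this
  have decomp : p / Real.sqrt u - pt / Real.sqrt v
      = (p - pt) / Real.sqrt u + pt * (Real.sqrt v - Real.sqrt u) / (Real.sqrt u * Real.sqrt v) := by
    field_simp
    ring
  rw [decomp]
  refine (abs_add_le _ _).trans ?_
  have h1 : |(p - pt) / Real.sqrt u| ≤ |p - pt| / δ := by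
    rw [abs_div, abs_of_pos hsupos]
    gcongr
  have hsd : |Real.sqrt v - Real.sqrt u| ≤ |v - u| / (2 * δ) :=
    abs_sqrt_sub_sqrt v u δ hδ hv0 hu0 hsv hsu
  have h2 : |pt * (Real.sqrt v - Real.sqrt u) / (Real.sqrt u * Real.sqrt v)| ≤ |u - v| / (2 * δ^2) := by
    rw [abs_div, abs_mul, abs_of_pos (by positivity : (0:ℝ) < Real.sqrt u * Real.sqrt v),
      abs_of_nonneg hpt0]
    calc pt * |Real.sqrt v - Real.sqrt u| / (Real.sqrt u * Real.sqrt v)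
        ≤ Real.sqrt v * (|v - u| / (2 * δ)) / (δ * Real.sqrt v) := by gcongr
      _ = |v - u| / (2 * δ^2) := by field_simp
      _ = |u - v| / (2 * δ^2) := by rw [abs_sub_comm]
  linarith

lemma Qdiff_sum (P Pt : (∀ i, Fin (K i)) → ℝ)
    (hP0 : ∀ x, 0 ≤ P x) (hP1 : ∑ x, P x = 1)
    (hPt0 : ∀ x, 0 ≤ Pt x) (hPt1 : ∑ x, Pt x = 1)
    (δ : ℝ) (hδpos : 0 < δ) (hδ1 : δ ≤ 1)
    (hδP : ∀ i (j : Fin (K i)), δ ≤ margPmf K P i j)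
    (hδPt : ∀ i (j : Fin (K i)), δ ≤ margPmf K Pt i j)
    (γ : ℝ) (hγ0 : 0 ≤ γ) (hγ : ∀ x, |P x - Pt x| ≤ γ) (i i' : Fin n) :
    ∑ j, ∑ j', |pairPmf K P i i' j j' / Real.sqrt (margPmf K P i j * margPmf K P i' j')
      - pairPmf K Pt i i' j j' / Real.sqrt (margPmf K Pt i j * margPmf K Pt i' j')|
    ≤ 2 * (γ * (Fintype.card (∀ i, Fin (K i)) : ℝ)) / δ ^ 2 := by
  set N : ℝ := (Fintype.card (∀ i, Fin (K i)) : ℝ) with hN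
  have entry : ∀ (j : Fin (K i)) (j' : Fin (K i')),
      |pairPmf K P i i' j j' / Real.sqrt (margPmf K P i j * margPmf K P i' j')
        - pairPmf K Pt i i' j j' / Real.sqrt (margPmf K Pt i j * margPmf K Pt i' j')|
      ≤ |pairPmf K P i i' j j' - pairPmf K Pt i i' j j'| / δ
        + |margPmf K P i j * margPmf K P i' j' - margPmf K Pt i j * margPmf K Pt i' j'| / (2 * δ^2) := by
    intro j j'
    refine Q_entry_diff _ _ _ _ δ hδpos (pair_nonneg P hP0 i i' j j') (pair_nonneg Pt hPt0 i i' j j')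
      ?_ ?_ ?_
    · have := mul_le_mul (hδP i j) (hδP i' j') hδpos.le (marg_nonneg P hP0 i j)
      nlinarith
    · have := mul_le_mul (hδPt i j) (hδPt i' j') hδpos.le (marg_nonneg Pt hPt0 i j)
      nlinarith
    · have h1 := pair_le_left Pt hPt0 i i' j j'
      have h2 := pair_le_right Pt hPt0 i i' j j'
      have h3 := pair_nonneg Pt hPt0 i i' j j'
      nlinarith
  have prod_entry : ∀ (j : Fin (K i)) (j' : Fin (K i')),
      |margPmf K P i j * margPmf K P i' j' - margPmf K Pt i j * margPmf K Pt i' j'|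
      ≤ |margPmf K P i j - margPmf K Pt i j| * margPmf K P i' j'
        + margPmf K Pt i j * |margPmf K P i' j' - margPmf K Pt i' j'| := by
    intro j j'
    have h1 : margPmf K P i j * margPmf K P i' j' - margPmf K Pt i j * margPmf K Pt i' j'
        = (margPmf K P i j - margPmf K Pt i j) * margPmf K P i' j'
          + margPmf K Pt i j * (margPmf K P i' j' - margPmf K Pt i' j') := by ring
    rw [h1]
    refine (abs_add_le _ _).trans ?_
    rw [abs_mul, abs_mul, abs_of_nonneg (marg_nonneg P hP0 i' j'),
      abs_of_nonneg (marg_nonneg Pt hPt0 i j)]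
  have prod_sum : ∑ j, ∑ j',
      |margPmf K P i j * margPmf K P i' j' - margPmf K Pt i j * margPmf K Pt i' j'|
      ≤ 2 * (γ * N) := by
    calc ∑ j, ∑ j', |margPmf K P i j * margPmf K P i' j' - margPmf K Pt i j * margPmf K Pt i' j'|
        ≤ ∑ j, ∑ j', (|margPmf K P i j - margPmf K Pt i j| * margPmf K P i' j'
          + margPmf K Pt i j * |margPmf K P i' j' - margPmf K Pt i' j'|) :=
          Finset.sum_le_sum fun j _ => Finset.sum_le_sum fun j' _ => prod_entry j j'
      _ = (∑ j, |margPmf K P i j - margPmf K Pt i j|) * (∑ j', margPmf K P i' j')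
          + (∑ j, margPmf K Pt i j) * (∑ j', |margPmf K P i' j' - margPmf K Pt i' j'|) := by
          simp [Finset.sum_add_distrib, ← Finset.sum_mul, ← Finset.mul_sum]
      _ = (∑ j, |margPmf K P i j - margPmf K Pt i j|)
          + (∑ j', |margPmf K P i' j' - margPmf K Pt i' j'|) := by
          rw [marg_sum P hP1 i', marg_sum Pt hPt1 i]; ring
      _ ≤ γ * N + γ * N := add_le_add (marg_absdiff_sum P Pt γ hγ i) (marg_absdiff_sum P Pt γ hγ i')
      _ = 2 * (γ * N) := by ring
  calc ∑ j, ∑ j', |pairPmf K P i i' j j' / Real.sqrt (margPmf K P i j * margPmf K P i' j')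
        - pairPmf K Pt i i' j j' / Real.sqrt (margPmf K Pt i j * margPmf K Pt i' j')|
      ≤ ∑ j, ∑ j', (|pairPmf K P i i' j j' - pairPmf K Pt i i' j j'| / δ
        + |margPmf K P i j * margPmf K P i' j' - margPmf K Pt i j * margPmf K Pt i' j'| / (2 * δ^2)) :=
        Finset.sum_le_sum fun j _ => Finset.sum_le_sum fun j' _ => entry j j'
    _ = (∑ j, ∑ j', |pairPmf K P i i' j j' - pairPmf K Pt i i' j j'|) / δ
        + (∑ j, ∑ j', |margPmf K P i j * margPmf K P i' j' - margPmf K Pt i j * margPmf K Pt i' j'|) / (2 * δ^2) := by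
        simp [Finset.sum_add_distrib, Finset.sum_div]
    _ ≤ (γ * N) / δ + (2 * (γ * N)) / (2 * δ^2) := by
        refine add_le_add ((div_le_div_iff_of_pos_right hδpos).mpr (pair_absdiff_sum P Pt γ hγ i i'))
          ((div_le_div_iff_of_pos_right (by positivity)).mpr prod_sum)
    _ ≤ 2 * (γ * N) / δ ^ 2 := by
        have hγN : 0 ≤ γ * N := by positivity
        have hδ2 : δ^2 ≤ δ := by nlinarith
        have h1 : (γ * N) / δ ≤ (γ * N) / δ^2 := by gcongr
        have h2 : (2 * (γ * N)) / (2 * δ^2) = (γ * N) / δ^2 := by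
          field_simp
        have h3 : 2 * (γ * N) / δ^2 = (γ * N) / δ^2 + (γ * N) / δ^2 := by ring
        linarith
end Aux3

noncomputable def objE {n : ℕ} (K : Fin n → ℕ) (P : (∀ i, Fin (K i)) → ℝ)
    (E : Finset (Fin n × Fin n)) (a : ∀ i, Fin (K i) → ℝ) : ℝ :=
  ∑ e ∈ E, ∑ j, ∑ j', a e.1 j * (pairPmf K P e.1 e.2 j j' /
    Real.sqrt (margPmf K P e.1 j * margPmf K P e.2 j')) * a e.2 j'

section Aux4
variable {n : ℕ} {K : Fin n → ℕ}

lemma entry_abs_le_one {k : ℕ} (a : Fin k → ℝ) (h : ∑ j, a j ^ 2 = 1) (j : Fin k) :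
    |a j| ≤ 1 := by
  have h1 : a j ^ 2 ≤ 1 := by
    rw [← h]
    exact Finset.single_le_sum (f := fun j' => a j' ^ 2) (fun j' _ => sq_nonneg _)
      (Finset.mem_univ j)
  nlinarith [abs_nonneg (a j), sq_abs (a j)]

lemma abs_mul3_le (x y z : ℝ) (hx : |x| ≤ 1) (hz : |z| ≤ 1) : |x * y * z| ≤ |y| := by
  rw [abs_mul, abs_mul]
  calc |x| * |y| * |z| ≤ 1 * |y| * 1 := by gcongr
    _ = |y| := by ring

lemma obj_perturb (P Pt : (∀ i, Fin (K i)) → ℝ)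
    (hP0 : ∀ x, 0 ≤ P x) (hP1 : ∑ x, P x = 1)
    (hPt0 : ∀ x, 0 ≤ Pt x) (hPt1 : ∑ x, Pt x = 1)
    (δ : ℝ) (hδpos : 0 < δ) (hδ1 : δ ≤ 1)
    (hδP : ∀ i (j : Fin (K i)), δ ≤ margPmf K P i j)
    (hδPt : ∀ i (j : Fin (K i)), δ ≤ margPmf K Pt i j)
    (γ : ℝ) (hγ0 : 0 ≤ γ) (hγ : ∀ x, |P x - Pt x| ≤ γ)
    (E : Finset (Fin n × Fin n)) (a : ∀ i, Fin (K i) → ℝ) (ha : ∀ i j, |a i j| ≤ 1) :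
    |objE K P E a - objE K Pt E a|
      ≤ E.card * (2 * (γ * (Fintype.card (∀ i, Fin (K i)) : ℝ)) / δ ^ 2) := by
  set N : ℝ := (Fintype.card (∀ i, Fin (K i)) : ℝ) with hN
  unfold objE
  rw [← Finset.sum_sub_distrib]
  refine (Finset.abs_sum_le_sum_abs _ _).trans ?_
  have main : ∀ e ∈ E, |(∑ j, ∑ j', a e.1 j * (pairPmf K P e.1 e.2 j j' /
        Real.sqrt (margPmf K P e.1 j * margPmf K P e.2 j')) * a e.2 j')
      - (∑ j, ∑ j', a e.1 j * (pairPmf K Pt e.1 e.2 j j' /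
        Real.sqrt (margPmf K Pt e.1 j * margPmf K Pt e.2 j')) * a e.2 j')|
      ≤ 2 * (γ * N) / δ ^ 2 := by
    intro e _
    have heq : (∑ j, ∑ j', a e.1 j * (pairPmf K P e.1 e.2 j j' /
          Real.sqrt (margPmf K P e.1 j * margPmf K P e.2 j')) * a e.2 j')
        - (∑ j, ∑ j', a e.1 j * (pairPmf K Pt e.1 e.2 j j' /
          Real.sqrt (margPmf K Pt e.1 j * margPmf K Pt e.2 j')) * a e.2 j')
        = ∑ j, ∑ j', a e.1 j * (pairPmf K P e.1 e.2 j j' /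
            Real.sqrt (margPmf K P e.1 j * margPmf K P e.2 j')
          - pairPmf K Pt e.1 e.2 j j' /
            Real.sqrt (margPmf K Pt e.1 j * margPmf K Pt e.2 j')) * a e.2 j' := by
      rw [← Finset.sum_sub_distrib]
      refine Finset.sum_congr rfl fun j _ => ?_
      rw [← Finset.sum_sub_distrib]
      refine Finset.sum_congr rfl fun j' _ => ?_
      ring
    rw [heq]
    refine (Finset.abs_sum_le_sum_abs _ _).trans ?_
    have step : ∀ j : Fin (K e.1), |∑ j', a e.1 j * (pairPmf K P e.1 e.2 j j' /
          Real.sqrt (margPmf K P e.1 j * margPmf K P e.2 j')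
        - pairPmf K Pt e.1 e.2 j j' /
          Real.sqrt (margPmf K Pt e.1 j * margPmf K Pt e.2 j')) * a e.2 j'|
        ≤ ∑ j', |pairPmf K P e.1 e.2 j j' /
          Real.sqrt (margPmf K P e.1 j * margPmf K P e.2 j')
        - pairPmf K Pt e.1 e.2 j j' /
          Real.sqrt (margPmf K Pt e.1 j * margPmf K Pt e.2 j')| := by
      intro j
      refine (Finset.abs_sum_le_sum_abs _ _).trans ?_
      refine Finset.sum_le_sum fun j' _ => ?_
      exact abs_mul3_le _ _ _ (ha e.1 j) (ha e.2 j')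
    refine (Finset.sum_le_sum fun j _ => step j).trans ?_
    exact Qdiff_sum P Pt hP0 hP1 hPt0 hPt1 δ hδpos hδ1 hδP hδPt γ hγ0 hγ e.1 e.2
  refine (Finset.sum_le_sum main).trans ?_
  rw [Finset.sum_const, nsmul_eq_mul]
end Aux4

noncomputable def baseVec (k : ℕ) (hk : 2 ≤ k) (m : Fin k → ℝ) : Fin k → ℝ := fun j =>
  if j = (⟨0, by omega⟩ : Fin k) then
    Real.sqrt (m ⟨1, by omega⟩) / Real.sqrt (m ⟨0, by omega⟩ + m ⟨1, by omega⟩)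
  else if j = (⟨1, by omega⟩ : Fin k) then
    -(Real.sqrt (m ⟨0, by omega⟩) / Real.sqrt (m ⟨0, by omega⟩ + m ⟨1, by omega⟩))
  else 0

section Aux5
variable {k : ℕ} (hk : 2 ≤ k) (m : Fin k → ℝ)

lemma fin_sum_two (F : Fin k → ℝ)
    (hF : ∀ j : Fin k, j ≠ (⟨0, by omega⟩ : Fin k) → j ≠ (⟨1, by omega⟩ : Fin k) → F j = 0) :
    ∑ j, F j = F ⟨0, by omega⟩ + F ⟨1, by omega⟩ := by
  have hne : (⟨0, by omega⟩ : Fin k) ≠ (⟨1, by omega⟩ : Fin k) := by simp [Fin.ext_iff]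
  rw [← Finset.sum_pair hne]
  refine (Finset.sum_subset (Finset.subset_univ _) fun j _ hj => ?_).symm
  simp only [Finset.mem_insert, Finset.mem_singleton, not_or] at hj
  exact hF j hj.1 hj.2

lemma baseVec_sum (g : ℝ → ℝ) (hg : g 0 = 0) :
    ∑ j, g (baseVec k hk m j)
      = g (baseVec k hk m ⟨0, by omega⟩) + g (baseVec k hk m ⟨1, by omega⟩) := by
  refine fin_sum_two hk _ fun j hj0 hj1 => ?_
  rw [show baseVec k hk m j = 0 by simp [baseVec, hj0, hj1], hg]

lemma baseVec_props (h0 : 0 < m ⟨0, by omega⟩) (h1 : 0 < m ⟨1, by omega⟩)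
    (hm : ∀ j, 0 ≤ m j) :
    (∑ j, baseVec k hk m j ^ 2 = 1) ∧ (∑ j, baseVec k hk m j * Real.sqrt (m j) = 0) := by
  have hne : (⟨0, by omega⟩ : Fin k) ≠ (⟨1, by omega⟩ : Fin k) := by
    simp [Fin.ext_iff]
  have hv0 : baseVec k hk m ⟨0, by omega⟩
      = Real.sqrt (m ⟨1, by omega⟩) / Real.sqrt (m ⟨0, by omega⟩ + m ⟨1, by omega⟩) := by
    simp [baseVec]
  have hv1 : baseVec k hk m ⟨1, by omega⟩
      = -(Real.sqrt (m ⟨0, by omega⟩) / Real.sqrt (m ⟨0, by omega⟩ + m ⟨1, by omega⟩)) := by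
    simp [baseVec, hne.symm]
  have hcpos : 0 < Real.sqrt (m ⟨0, by omega⟩ + m ⟨1, by omega⟩) :=
    Real.sqrt_pos.mpr (by linarith)
  have hc2 : Real.sqrt (m ⟨0, by omega⟩ + m ⟨1, by omega⟩) ^ 2
      = m ⟨0, by omega⟩ + m ⟨1, by omega⟩ := Real.sq_sqrt (by linarith)
  have hs0 : Real.sqrt (m ⟨0, by omega⟩) ^ 2 = m ⟨0, by omega⟩ := Real.sq_sqrt h0.le
  have hs1 : Real.sqrt (m ⟨1, by omega⟩) ^ 2 = m ⟨1, by omega⟩ := Real.sq_sqrt h1.le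
  constructor
  · rw [baseVec_sum hk m (fun t => t ^ 2) (by norm_num), hv0, hv1]
    field_simp
    nlinarith [hc2, hs0, hs1]
  · have hsum : ∑ j, baseVec k hk m j * Real.sqrt (m j)
        = baseVec k hk m ⟨0, by omega⟩ * Real.sqrt (m ⟨0, by omega⟩)
          + baseVec k hk m ⟨1, by omega⟩ * Real.sqrt (m ⟨1, by omega⟩) := by
      refine fin_sum_two hk _ fun j hj0 hj1 => ?_
      rw [show baseVec k hk m j = 0 by simp [baseVec, hj0, hj1], zero_mul]
    rw [hsum, hv0, hv1]
    ring
end Aux5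

lemma proj_lemma {k : ℕ} (a s : Fin k → ℝ) (ε : ℝ)
    (hsq : ∑ j, a j ^ 2 = 1) (hs : ∑ j, s j ^ 2 = 1)
    (hε : ∑ j, a j * s j = ε) (hεle : ε ^ 2 ≤ 1 / 2) :
    (∑ j, ((a j - ε * s j) / Real.sqrt (1 - ε ^ 2)) ^ 2 = 1) ∧
    (∑ j, ((a j - ε * s j) / Real.sqrt (1 - ε ^ 2)) * s j = 0) ∧
    (∑ j, ((a j - ε * s j) / Real.sqrt (1 - ε ^ 2) - a j) ^ 2 ≤ 2 * ε ^ 2) := by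
  set c := Real.sqrt (1 - ε ^ 2) with hcdef
  have hc2 : c ^ 2 = 1 - ε ^ 2 := Real.sq_sqrt (by linarith)
  have hcpos : 0 < c := Real.sqrt_pos.mpr (by linarith)
  have hc1 : c ≤ 1 := by nlinarith
  have hA : ∑ j, (a j - ε * s j) ^ 2 = 1 - ε ^ 2 := by
    have h : ∀ j : Fin k, (a j - ε * s j) ^ 2
        = a j ^ 2 - 2 * ε * (a j * s j) + ε ^ 2 * s j ^ 2 := fun j => by ring
    simp_rw [h]
    rw [Finset.sum_add_distrib, Finset.sum_sub_distrib, ← Finset.mul_sum, ← Finset.mul_sum,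
      hsq, hs, hε]
    ring
  have hB : ∑ j, (a j - ε * s j) * s j = 0 := by
    have h : ∀ j : Fin k, (a j - ε * s j) * s j = a j * s j - ε * s j ^ 2 := fun j => by ring
    simp_rw [h]
    rw [Finset.sum_sub_distrib, ← Finset.mul_sum, hs, hε]
    ring
  have h1 : ∑ j, ((a j - ε * s j) / c) ^ 2 = 1 := by
    simp_rw [div_pow, ← Finset.sum_div, hA, ← hc2]
    exact div_self (pow_ne_zero _ hcpos.ne')
  have h2 : ∑ j, ((a j - ε * s j) / c) * s j = 0 := by
    simp_rw [div_mul_eq_mul_div, ← Finset.sum_div, hB, zero_div]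
  have hab : ∑ j, ((a j - ε * s j) / c) * a j = c := by
    have h : ∀ j : Fin k, ((a j - ε * s j) / c) * a j
        = (a j ^ 2 - ε * (a j * s j)) / c := fun j => by ring
    simp_rw [h]
    rw [← Finset.sum_div, Finset.sum_sub_distrib, ← Finset.mul_sum, hsq, hε,
      eq_comm, eq_div_iff hcpos.ne']
    nlinarith
  have h3 : ∑ j, ((a j - ε * s j) / c - a j) ^ 2 ≤ 2 * ε ^ 2 := by
    have h : ∀ j : Fin k, ((a j - ε * s j) / c - a j) ^ 2
        = ((a j - ε * s j) / c) ^ 2 - 2 * (((a j - ε * s j) / c) * a j) + a j ^ 2 :=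
      fun j => by ring
    simp_rw [h]
    rw [Finset.sum_add_distrib, Finset.sum_sub_distrib, ← Finset.mul_sum, h1, hab, hsq]
    nlinarith
  exact ⟨h1, h2, h3⟩

lemma l1_le_sqrt {k : ℕ} (x : Fin k → ℝ) :
    ∑ j, |x j| ≤ Real.sqrt k * Real.sqrt (∑ j, x j ^ 2) := by
  have h := Real.sum_mul_le_sqrt_mul_sqrt Finset.univ (fun _ => (1:ℝ)) (fun j => |x j|)
  simpa [sq_abs] using h

lemma bilin_abs_bound {k k' : ℕ} (Q : Fin k → Fin k' → ℝ) (hQ : ∀ j j', |Q j j'| ≤ 1)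
    (x : Fin k → ℝ) (y : Fin k' → ℝ) :
    |∑ j, ∑ j', x j * Q j j' * y j'|
      ≤ (Real.sqrt k * Real.sqrt (∑ j, x j ^ 2)) * (Real.sqrt k' * Real.sqrt (∑ j', y j' ^ 2)) := by
  have step0 : ∀ j : Fin k, |∑ j', x j * Q j j' * y j'| ≤ |x j| * ∑ j', |y j'| := by
    intro j
    refine (Finset.abs_sum_le_sum_abs _ _).trans ?_
    rw [Finset.mul_sum]
    refine Finset.sum_le_sum fun j' _ => ?_
    calc |x j * Q j j' * y j'| = |x j| * |Q j j'| * |y j'| := by rw [abs_mul, abs_mul]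
      _ ≤ |x j| * 1 * |y j'| := by gcongr; exact hQ j j'
      _ = |x j| * |y j'| := by ring
  have step1 : |∑ j, ∑ j', x j * Q j j' * y j'| ≤ (∑ j, |x j|) * (∑ j', |y j'|) := by
    refine (Finset.abs_sum_le_sum_abs _ _).trans ?_
    refine (Finset.sum_le_sum fun j _ => step0 j).trans ?_
    rw [← Finset.sum_mul]
  refine step1.trans ?_
  have h1 := l1_le_sqrt x
  have h2 := l1_le_sqrt y
  have hx0 : 0 ≤ ∑ j, |x j| := Finset.sum_nonneg fun j _ => abs_nonneg _
  have hy0 : 0 ≤ ∑ j', |y j'| := Finset.sum_nonneg fun j _ => abs_nonneg _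
  exact mul_le_mul h1 h2 hy0 (by positivity)

lemma numeric_bound (Ki Ki' ε t δ : ℝ) (hδ : 0 < δ) (hδ1 : δ ≤ 1)
    (hKi : Ki * δ ≤ 1) (hKi' : Ki' * δ ≤ 1) (hKi0 : 0 ≤ Ki) (hKi'0 : 0 ≤ Ki')
    (ht : 0 ≤ t) (hε : ε ^ 2 * (4 * δ) ≤ t ^ 2) :
    (Real.sqrt Ki * Real.sqrt (2 * ε ^ 2)) * (Real.sqrt Ki' * 1) ≤ t / δ ^ 2 := by
  rw [mul_one, ← Real.sqrt_mul hKi0, ← Real.sqrt_mul (by positivity)]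
  have key : Ki * (2 * ε ^ 2) * Ki' ≤ (t / δ ^ 2) ^ 2 := by
    rw [div_pow, le_div_iff₀ (by positivity)]
    have h1 : Ki * δ * (Ki' * δ) ≤ 1 :=
      mul_le_one₀ hKi (by positivity) hKi'
    nlinarith [sq_nonneg ε, sq_nonneg t, mul_nonneg (mul_nonneg hKi0 hδ.le) (mul_nonneg hKi'0 hδ.le),
      mul_le_of_le_one_left (mul_nonneg (sq_nonneg ε) (by linarith : (0:ℝ) ≤ 4*δ)) h1]
  calc Real.sqrt (Ki * (2 * ε ^ 2) * Ki') ≤ Real.sqrt ((t / δ ^ 2) ^ 2) := Real.sqrt_le_sqrt key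
    _ = t / δ ^ 2 := Real.sqrt_sq (by positivity)

lemma obj_shift {n : ℕ} {K : Fin n → ℕ} (Pt : (∀ i, Fin (K i)) → ℝ)
    (hPt0 : ∀ x, 0 ≤ Pt x)
    (δ : ℝ) (hδpos : 0 < δ) (hδ1 : δ ≤ 1)
    (hδPt : ∀ i (j : Fin (K i)), δ ≤ margPmf K Pt i j)
    (hKδ : ∀ i, (K i : ℝ) * δ ≤ 1)
    (E : Finset (Fin n × Fin n)) (a b : ∀ i, Fin (K i) → ℝ)
    (ha1 : ∀ i, ∑ j, a i j ^ 2 = 1) (hb1 : ∀ i, ∑ j, b i j ^ 2 = 1)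
    (ε : Fin n → ℝ) (hdiff : ∀ i, ∑ j, (b i j - a i j) ^ 2 ≤ 2 * ε i ^ 2)
    (t : ℝ) (ht : 0 ≤ t) (hε : ∀ i, ε i ^ 2 * (4 * δ) ≤ t ^ 2) :
    |objE K Pt E b - objE K Pt E a| ≤ E.card * (2 * t / δ ^ 2) := by
  have hQ : ∀ (i i' : Fin n) (j : Fin (K i)) (j' : Fin (K i')),
      |pairPmf K Pt i i' j j' / Real.sqrt (margPmf K Pt i j * margPmf K Pt i' j')| ≤ 1 := by
    intro i i' j j'
    have hm1 : 0 < margPmf K Pt i j := lt_of_lt_of_le hδpos (hδPt i j)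
    have hm2 : 0 < margPmf K Pt i' j' := lt_of_lt_of_le hδpos (hδPt i' j')
    have hu : 0 < margPmf K Pt i j * margPmf K Pt i' j' := mul_pos hm1 hm2
    have hsu : 0 < Real.sqrt (margPmf K Pt i j * margPmf K Pt i' j') := Real.sqrt_pos.mpr hu
    have hp0 := pair_nonneg Pt hPt0 i i' j j'
    have hple : pairPmf K Pt i i' j j' ≤ Real.sqrt (margPmf K Pt i j * margPmf K Pt i' j') := by
      have h1 := pair_le_left Pt hPt0 i i' j j'
      have h2 := pair_le_right Pt hPt0 i i' j j'
      have : pairPmf K Pt i i' j j' ^ 2 ≤ margPmf K Pt i j * margPmf K Pt i' j' := by nlinarith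
      have := Real.sqrt_le_sqrt this
      rwa [Real.sqrt_sq hp0] at this
    rw [abs_div, abs_of_nonneg hp0, abs_of_pos hsu, div_le_one hsu]
    exact hple
  unfold objE
  rw [← Finset.sum_sub_distrib]
  refine (Finset.abs_sum_le_sum_abs _ _).trans ?_
  have main : ∀ e ∈ E, |(∑ j, ∑ j', b e.1 j * (pairPmf K Pt e.1 e.2 j j' /
        Real.sqrt (margPmf K Pt e.1 j * margPmf K Pt e.2 j')) * b e.2 j')
      - (∑ j, ∑ j', a e.1 j * (pairPmf K Pt e.1 e.2 j j' /
        Real.sqrt (margPmf K Pt e.1 j * margPmf K Pt e.2 j')) * a e.2 j')|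
      ≤ 2 * t / δ ^ 2 := by
    intro e _
    set Q : Fin (K e.1) → Fin (K e.2) → ℝ := fun j j' => pairPmf K Pt e.1 e.2 j j' /
        Real.sqrt (margPmf K Pt e.1 j * margPmf K Pt e.2 j') with hQdef
    have heq : (∑ j, ∑ j', b e.1 j * Q j j' * b e.2 j')
        - (∑ j, ∑ j', a e.1 j * Q j j' * a e.2 j')
        = (∑ j, ∑ j', (b e.1 j - a e.1 j) * Q j j' * b e.2 j')
          + (∑ j, ∑ j', a e.1 j * Q j j' * (b e.2 j' - a e.2 j')) := by
      rw [← Finset.sum_add_distrib, ← Finset.sum_sub_distrib]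
      refine Finset.sum_congr rfl fun j _ => ?_
      rw [← Finset.sum_add_distrib, ← Finset.sum_sub_distrib]
      refine Finset.sum_congr rfl fun j' _ => ?_
      ring
    rw [heq]
    refine (abs_add_le _ _).trans ?_
    have hKi := hKδ e.1
    have hKi' := hKδ e.2
    have b1 : |∑ j, ∑ j', (b e.1 j - a e.1 j) * Q j j' * b e.2 j'| ≤ t / δ ^ 2 := by
      refine (bilin_abs_bound Q (hQ e.1 e.2) _ _).trans ?_
      have s1 : Real.sqrt (∑ j, (b e.1 j - a e.1 j) ^ 2) ≤ Real.sqrt (2 * ε e.1 ^ 2) :=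
        Real.sqrt_le_sqrt (hdiff e.1)
      have s2 : Real.sqrt (∑ j', b e.2 j' ^ 2) = 1 := by rw [hb1 e.2, Real.sqrt_one]
      rw [s2]
      refine le_trans ?_ (numeric_bound (K e.1) (K e.2) (ε e.1) t δ hδpos hδ1 hKi hKi'
        (Nat.cast_nonneg _) (Nat.cast_nonneg _) ht (hε e.1))
      gcongr
    have b2 : |∑ j, ∑ j', a e.1 j * Q j j' * (b e.2 j' - a e.2 j')| ≤ t / δ ^ 2 := by
      refine (bilin_abs_bound Q (hQ e.1 e.2) _ _).trans ?_
      have s1 : Real.sqrt (∑ j', (b e.2 j' - a e.2 j') ^ 2) ≤ Real.sqrt (2 * ε e.2 ^ 2) :=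
        Real.sqrt_le_sqrt (hdiff e.2)
      have s2 : Real.sqrt (∑ j, a e.1 j ^ 2) = 1 := by rw [ha1 e.1, Real.sqrt_one]
      rw [s2]
      have hnum := numeric_bound (K e.2) (K e.1) (ε e.2) t δ hδpos hδ1 hKi' hKi
        (Nat.cast_nonneg _) (Nat.cast_nonneg _) ht (hε e.2)
      calc (Real.sqrt (K e.1) * 1) * (Real.sqrt (K e.2) * Real.sqrt (∑ j', (b e.2 j' - a e.2 j') ^ 2))
          ≤ (Real.sqrt (K e.1) * 1) * (Real.sqrt (K e.2) * Real.sqrt (2 * ε e.2 ^ 2)) := by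
            gcongr
        _ = (Real.sqrt (K e.2) * Real.sqrt (2 * ε e.2 ^ 2)) * (Real.sqrt (K e.1) * 1) := by ring
        _ ≤ t / δ ^ 2 := hnum
    have : 2 * t / δ ^ 2 = t / δ ^ 2 + t / δ ^ 2 := by ring
    rw [this]
    exact add_le_add b1 b2
  refine (Finset.sum_le_sum main).trans ?_
  rw [Finset.sum_const, nsmul_eq_mul]

section Aux8
variable {n : ℕ} {K : Fin n → ℕ}

lemma Q_abs_le_one (P : (∀ i, Fin (K i)) → ℝ) (hP0 : ∀ x, 0 ≤ P x)
    (hpos : ∀ i (j : Fin (K i)), 0 < margPmf K P i j) (i i' : Fin n)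
    (j : Fin (K i)) (j' : Fin (K i')) :
    |pairPmf K P i i' j j' / Real.sqrt (margPmf K P i j * margPmf K P i' j')| ≤ 1 := by
  have hu : 0 < margPmf K P i j * margPmf K P i' j' := mul_pos (hpos i j) (hpos i' j')
  have hsu : 0 < Real.sqrt (margPmf K P i j * margPmf K P i' j') := Real.sqrt_pos.mpr hu
  have hp0 := pair_nonneg P hP0 i i' j j'
  have hple : pairPmf K P i i' j j' ≤ Real.sqrt (margPmf K P i j * margPmf K P i' j') := by
    have h1 := pair_le_left P hP0 i i' j j'
    have h2 := pair_le_right P hP0 i i' j j'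
    have h3 : pairPmf K P i i' j j' ^ 2 ≤ margPmf K P i j * margPmf K P i' j' := by nlinarith
    have h4 := Real.sqrt_le_sqrt h3
    rwa [Real.sqrt_sq hp0] at h4
  rw [abs_div, abs_of_nonneg hp0, abs_of_pos hsu, div_le_one hsu]
  exact hple

lemma bddAbove_nmcSet (P : (∀ i, Fin (K i)) → ℝ) (hP0 : ∀ x, 0 ≤ P x)
    (hpos : ∀ i (j : Fin (K i)), 0 < margPmf K P i j) (E : Finset (Fin n × Fin n)) :
    BddAbove {r : ℝ | ∃ a : ∀ i, Fin (K i) → ℝ,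
      (∀ i, ∑ j, (a i j) ^ 2 = 1) ∧
      (∀ i, ∑ j, a i j * Real.sqrt (margPmf K P i j) = 0) ∧
      r = ∑ e ∈ E, ∑ j, ∑ j', a e.1 j * (pairPmf K P e.1 e.2 j j' /
        Real.sqrt (margPmf K P e.1 j * margPmf K P e.2 j')) * a e.2 j'} := by
  refine ⟨∑ e ∈ E, (Real.sqrt (K e.1) * 1) * (Real.sqrt (K e.2) * 1), ?_⟩
  rintro r ⟨a, ha1, _, rfl⟩
  refine le_trans (Finset.sum_le_sum fun e _ => le_abs_self _) ?_
  refine Finset.sum_le_sum fun e _ => ?_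
  refine le_trans (bilin_abs_bound _ (fun j j' => Q_abs_le_one P hP0 hpos e.1 e.2 j j') _ _) ?_
  rw [ha1 e.1, ha1 e.2, Real.sqrt_one]

lemma eps_bound (P Pt : (∀ i, Fin (K i)) → ℝ)
    (δ : ℝ) (hδpos : 0 < δ)
    (hδP : ∀ i (j : Fin (K i)), δ ≤ margPmf K P i j)
    (hδPt : ∀ i (j : Fin (K i)), δ ≤ margPmf K Pt i j)
    (γ : ℝ) (hγ : ∀ x, |P x - Pt x| ≤ γ) (i : Fin n)
    (a : Fin (K i) → ℝ) (ha : ∀ j, |a j| ≤ 1)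
    (horth : ∑ j, a j * Real.sqrt (margPmf K P i j) = 0) :
    |∑ j, a j * Real.sqrt (margPmf K Pt i j)|
      ≤ γ * (Fintype.card (∀ i, Fin (K i)) : ℝ) / (2 * Real.sqrt δ) := by
  have hsd : 0 < Real.sqrt δ := Real.sqrt_pos.mpr hδpos
  have heq : ∑ j, a j * Real.sqrt (margPmf K Pt i j)
      = ∑ j, a j * (Real.sqrt (margPmf K Pt i j) - Real.sqrt (margPmf K P i j)) := by
    rw [← sub_zero (∑ j, a j * Real.sqrt (margPmf K Pt i j)), ← horth,
      ← Finset.sum_sub_distrib]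
    refine Finset.sum_congr rfl fun j _ => by ring
  rw [heq]
  refine (Finset.abs_sum_le_sum_abs _ _).trans ?_
  have step : ∀ j : Fin (K i), |a j * (Real.sqrt (margPmf K Pt i j) - Real.sqrt (margPmf K P i j))|
      ≤ |margPmf K Pt i j - margPmf K P i j| / (2 * Real.sqrt δ) := by
    intro j
    rw [abs_mul]
    have h1 : |Real.sqrt (margPmf K Pt i j) - Real.sqrt (margPmf K P i j)|
        ≤ |margPmf K Pt i j - margPmf K P i j| / (2 * Real.sqrt δ) := by
      refine abs_sqrt_sub_sqrt _ _ (Real.sqrt δ) hsd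
        (le_trans hδpos.le (hδPt i j)) (le_trans hδpos.le (hδP i j)) ?_ ?_
      · exact Real.sqrt_le_sqrt (hδPt i j)
      · exact Real.sqrt_le_sqrt (hδP i j)
    calc |a j| * |Real.sqrt (margPmf K Pt i j) - Real.sqrt (margPmf K P i j)|
        ≤ 1 * (|margPmf K Pt i j - margPmf K P i j| / (2 * Real.sqrt δ)) := by
          refine mul_le_mul (ha j) h1 (abs_nonneg _) zero_le_one
      _ = |margPmf K Pt i j - margPmf K P i j| / (2 * Real.sqrt δ) := one_mul _
  refine (Finset.sum_le_sum fun j _ => step j).trans ?_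
  rw [← Finset.sum_div]
  gcongr
  have h2 : ∀ j : Fin (K i), |margPmf K Pt i j - margPmf K P i j|
      = |margPmf K P i j - margPmf K Pt i j| := fun j => abs_sub_comm _ _
  simp_rw [h2]
  exact marg_absdiff_sum P Pt γ hγ i
end Aux8

lemma nmc_le {n : ℕ} {K : Fin n → ℕ} (hK2 : ∀ i, 2 ≤ K i)
    (P Pt : (∀ i, Fin (K i)) → ℝ)
    (hP0 : ∀ x, 0 ≤ P x) (hP1 : ∑ x, P x = 1)
    (hPt0 : ∀ x, 0 ≤ Pt x) (hPt1 : ∑ x, Pt x = 1)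
    (hposP : ∀ i (j : Fin (K i)), 0 < margPmf K P i j)
    (hposPt : ∀ i (j : Fin (K i)), 0 < margPmf K Pt i j)
    (E : Finset (Fin n × Fin n))
    (δ : ℝ) (hδpos : 0 < δ) (hδ1 : δ ≤ 1)
    (hδP : ∀ i (j : Fin (K i)), δ ≤ margPmf K P i j)
    (hδPt : ∀ i (j : Fin (K i)), δ ≤ margPmf K Pt i j)
    (hKδ : ∀ i, (K i : ℝ) * δ ≤ 1)
    (γ : ℝ) (hγ0 : 0 ≤ γ) (hγ : ∀ x, |P x - Pt x| ≤ γ)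
    (hsmall : γ * (Fintype.card (∀ i, Fin (K i)) : ℝ) ≤ δ * Real.sqrt δ) :
    nmcPmf K P E ≤ nmcPmf K Pt E
      + E.card * (4 * (γ * (Fintype.card (∀ i, Fin (K i)) : ℝ)) / δ ^ 2) := by
  set N : ℝ := (Fintype.card (∀ i, Fin (K i)) : ℝ) with hN
  have hN0 : 0 ≤ N := Nat.cast_nonneg _
  set t : ℝ := γ * N with htdef
  have ht : 0 ≤ t := mul_nonneg hγ0 hN0
  have hsd : 0 < Real.sqrt δ := Real.sqrt_pos.mpr hδpos
  have hsd2 : Real.sqrt δ ^ 2 = δ := Real.sq_sqrt hδpos.le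
  -- nonemptiness of the P-feasible set
  have hane : ∃ a : ∀ i, Fin (K i) → ℝ,
      (∀ i, ∑ j, (a i j) ^ 2 = 1) ∧
      (∀ i, ∑ j, a i j * Real.sqrt (margPmf K P i j) = 0) := by
    refine ⟨fun i => baseVec (K i) (hK2 i) (margPmf K P i), ?_, ?_⟩
    · exact fun i => (baseVec_props (hK2 i) (margPmf K P i) (hposP i _) (hposP i _)
        (fun j => marg_nonneg P hP0 i j)).1
    · exact fun i => (baseVec_props (hK2 i) (margPmf K P i) (hposP i _) (hposP i _)
        (fun j => marg_nonneg P hP0 i j)).2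
  obtain ⟨a₀, ha₀1, ha₀2⟩ := hane
  have hSne : {r : ℝ | ∃ a : ∀ i, Fin (K i) → ℝ,
      (∀ i, ∑ j, (a i j) ^ 2 = 1) ∧
      (∀ i, ∑ j, a i j * Real.sqrt (margPmf K P i j) = 0) ∧
      r = ∑ e ∈ E, ∑ j, ∑ j', a e.1 j * (pairPmf K P e.1 e.2 j j' /
        Real.sqrt (margPmf K P e.1 j * margPmf K P e.2 j')) * a e.2 j'}.Nonempty :=
    ⟨_, a₀, ha₀1, ha₀2, rfl⟩
  have hbddPt := bddAbove_nmcSet Pt hPt0 hposPt E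
  unfold nmcPmf
  refine csSup_le hSne ?_
  rintro r ⟨a, ha1, ha2, rfl⟩
  have habs : ∀ i j, |a i j| ≤ 1 := fun i => entry_abs_le_one _ (ha1 i)
  set ε : Fin n → ℝ := fun i => ∑ j, a i j * Real.sqrt (margPmf K Pt i j) with hεdef
  have hεb : ∀ i, |ε i| ≤ t / (2 * Real.sqrt δ) := fun i =>
    eps_bound P Pt δ hδpos hδP hδPt γ hγ i (a i) (habs i) (ha2 i)
  have hε2 : ∀ i, ε i ^ 2 * (4 * δ) ≤ t ^ 2 := by
    intro i
    have h := hεb i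
    have h2 : ε i ^ 2 ≤ (t / (2 * Real.sqrt δ)) ^ 2 := by
      rw [← sq_abs]
      exact pow_le_pow_left₀ (abs_nonneg _) h 2
    have h3 : (t / (2 * Real.sqrt δ)) ^ 2 = t ^ 2 / (4 * δ) := by
      rw [div_pow]
      congr 1
      nlinarith
    rw [h3] at h2
    rw [← le_div_iff₀ (by positivity)]
    exact h2
  have hεhalf : ∀ i, ε i ^ 2 ≤ 1 / 2 := by
    intro i
    have h := hε2 i
    have h4 : t ^ 2 ≤ (δ * Real.sqrt δ) ^ 2 := pow_le_pow_left₀ ht hsmall 2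
    have h5 : (δ * Real.sqrt δ) ^ 2 = δ ^ 2 * δ := by
      rw [mul_pow, hsd2]
    have h6 : δ ^ 2 * δ ≤ δ := by nlinarith
    nlinarith [mul_pos hδpos hδpos]
  have hs2 : ∀ i, ∑ j, Real.sqrt (margPmf K Pt i j) ^ 2 = 1 := by
    intro i
    have : ∀ j : Fin (K i), Real.sqrt (margPmf K Pt i j) ^ 2 = margPmf K Pt i j := fun j =>
      Real.sq_sqrt (marg_nonneg Pt hPt0 i j)
    simp_rw [this]
    exact marg_sum Pt hPt1 i
  set b : ∀ i, Fin (K i) → ℝ := fun i j =>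
    (a i j - ε i * Real.sqrt (margPmf K Pt i j)) / Real.sqrt (1 - ε i ^ 2) with hbdef
  have hproj : ∀ i, (∑ j, b i j ^ 2 = 1) ∧
      (∑ j, b i j * Real.sqrt (margPmf K Pt i j) = 0) ∧
      (∑ j, (b i j - a i j) ^ 2 ≤ 2 * ε i ^ 2) := fun i =>
    proj_lemma (a i) (fun j => Real.sqrt (margPmf K Pt i j)) (ε i)
      (ha1 i) (hs2 i) rfl (hεhalf i)
  have d1 := obj_perturb P Pt hP0 hP1 hPt0 hPt1 δ hδpos hδ1 hδP hδPt γ hγ0 hγ E a habs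
  have d2 := obj_shift Pt hPt0 δ hδpos hδ1 hδPt hKδ E a b ha1 (fun i => (hproj i).1)
    ε (fun i => (hproj i).2.2) t ht hε2
  have hmem : objE K Pt E b ∈ {r : ℝ | ∃ a : ∀ i, Fin (K i) → ℝ,
      (∀ i, ∑ j, (a i j) ^ 2 = 1) ∧
      (∀ i, ∑ j, a i j * Real.sqrt (margPmf K Pt i j) = 0) ∧
      r = ∑ e ∈ E, ∑ j, ∑ j', a e.1 j * (pairPmf K Pt e.1 e.2 j j' /
        Real.sqrt (margPmf K Pt e.1 j * margPmf K Pt e.2 j')) * a e.2 j'} :=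
    ⟨b, fun i => (hproj i).1, fun i => (hproj i).2.1, rfl⟩
  have hle := le_csSup hbddPt hmem
  show objE K P E a ≤ _
  have heq : (E.card : ℝ) * (2 * t / δ ^ 2) + (E.card : ℝ) * (2 * t / δ ^ 2)
      = E.card * (4 * t / δ ^ 2) := by ring
  have heq2 : (E.card : ℝ) * (2 * (γ * N) / δ ^ 2) = (E.card : ℝ) * (2 * t / δ ^ 2) := by
    rw [htdef]
  rw [heq2] at d1
  have u1 := (abs_le.mp d1).2
  have u2 := (abs_le.mp d2).1
  linarith [hle, heq]

/-- NMC is continuous in the joint distribution: if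
`‖P − P̃‖_∞ ≤ γ ≤ δ^{3/2}·𝒦⁻¹` then `|ρ_G − ρ̃_G| ≤ 8·γ·𝒦·|E|/δ²`, where `𝒦 = Kⁿ` and `δ` is
the smallest marginal probability under either distribution. -/
theorem nmc_continuous_in_distribution
    (n : ℕ) (Kb : ℕ) (K : Fin n → ℕ) (hK2 : ∀ i, 2 ≤ K i) (hKle : ∀ i, K i ≤ Kb)
    (P Pt : (∀ i, Fin (K i)) → ℝ)
    (hP0 : ∀ x, 0 ≤ P x) (hP1 : ∑ x, P x = 1)
    (hPt0 : ∀ x, 0 ≤ Pt x) (hPt1 : ∑ x, Pt x = 1)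
    (hposP : ∀ i (j : Fin (K i)), 0 < margPmf K P i j)
    (hposPt : ∀ i (j : Fin (K i)), 0 < margPmf K Pt i j)
    (E : Finset (Fin n × Fin n)) (hE : ∀ e ∈ E, e.1 ≠ e.2)
    (δ : ℝ)
    (hδle : ∀ i (j : Fin (K i)), δ ≤ margPmf K P i j ∧ δ ≤ margPmf K Pt i j)
    (hδmem : ∃ i, ∃ j : Fin (K i), δ = margPmf K P i j ∨ δ = margPmf K Pt i j)
    (γ : ℝ)
    (hγ : ∀ x, |P x - Pt x| ≤ γ)
    (hγδ : γ ≤ δ ^ ((3 : ℝ) / 2) * ((Kb : ℝ) ^ n)⁻¹) :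
    |nmcPmf K P E - nmcPmf K Pt E| ≤ 8 * γ * (Kb : ℝ) ^ n * E.card / δ ^ 2 := by
  obtain ⟨i₀, j₀, hmem⟩ := hδmem
  have hδP : ∀ i (j : Fin (K i)), δ ≤ margPmf K P i j := fun i j => (hδle i j).1
  have hδPt : ∀ i (j : Fin (K i)), δ ≤ margPmf K Pt i j := fun i j => (hδle i j).2
  have hδpos : 0 < δ := by
    rcases hmem with h | h
    · rw [h]; exact hposP i₀ j₀
    · rw [h]; exact hposPt i₀ j₀
  have hδ1 : δ ≤ 1 := (hδP i₀ j₀).trans (marg_le_one P hP0 hP1 i₀ j₀)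
  have x₀ : ∀ i, Fin (K i) := fun i => ⟨0, by have := hK2 i; omega⟩
  have hγ0 : 0 ≤ γ := le_trans (abs_nonneg _) (hγ x₀)
  have hKδ : ∀ i, (K i : ℝ) * δ ≤ 1 := by
    intro i
    have h := Finset.card_nsmul_le_sum Finset.univ (margPmf K P i) δ (fun j _ => hδP i j)
    rw [marg_sum P hP1 i] at h
    simpa [nsmul_eq_mul] using h
  set N : ℝ := (Fintype.card (∀ i, Fin (K i)) : ℝ) with hN
  have hKb2 : 2 ≤ Kb := le_trans (hK2 i₀) (hKle i₀)
  have hKbn : (0:ℝ) < (Kb:ℝ)^n := by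
    have : (0:ℝ) < (Kb:ℝ) := by exact_mod_cast (by omega : 0 < Kb)
    positivity
  have hNle : N ≤ (Kb:ℝ)^n := by
    have hnat : Fintype.card (∀ i, Fin (K i)) ≤ Kb ^ n := by
      rw [Fintype.card_pi]
      simp only [Fintype.card_fin]
      calc ∏ i, K i ≤ Kb ^ (Finset.univ : Finset (Fin n)).card :=
            Finset.prod_le_pow_card _ _ _ (fun i _ => hKle i)
        _ = Kb ^ n := by rw [Finset.card_univ, Fintype.card_fin]
    rw [hN]
    exact_mod_cast hnat
  have hr : δ ^ ((3:ℝ)/2) = δ * Real.sqrt δ := by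
    rw [show ((3:ℝ)/2) = 1 + 1/2 by norm_num, Real.rpow_add hδpos, Real.rpow_one,
      ← Real.sqrt_eq_rpow]
  have hsmall : γ * N ≤ δ * Real.sqrt δ := by
    calc γ * N ≤ γ * (Kb:ℝ)^n := mul_le_mul_of_nonneg_left hNle hγ0
      _ ≤ (δ ^ ((3:ℝ)/2) * ((Kb:ℝ)^n)⁻¹) * (Kb:ℝ)^n :=
          mul_le_mul_of_nonneg_right hγδ hKbn.le
      _ = δ ^ ((3:ℝ)/2) := by field_simp
      _ = δ * Real.sqrt δ := hr
  have hγ' : ∀ x, |Pt x - P x| ≤ γ := fun x => by rw [abs_sub_comm]; exact hγ x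
  have h1 := nmc_le hK2 P Pt hP0 hP1 hPt0 hPt1 hposP hposPt E δ hδpos hδ1 hδP hδPt hKδ
    γ hγ0 hγ hsmall
  have h2 := nmc_le hK2 Pt P hPt0 hPt1 hP0 hP1 hposPt hposP E δ hδpos hδ1 hδPt hδP hKδ
    γ hγ0 hγ' hsmall
  have habs : |nmcPmf K P E - nmcPmf K Pt E| ≤ E.card * (4 * (γ * N) / δ ^ 2) :=
    abs_sub_le_iff.mpr ⟨by linarith, by linarith⟩
  refine habs.trans ?_
  have hc0 : (0:ℝ) ≤ E.card := Nat.cast_nonneg _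
  have hgN : γ * N ≤ γ * (Kb:ℝ)^n := mul_le_mul_of_nonneg_left hNle hγ0
  have key : (E.card:ℝ) * (4 * (γ * N)) ≤ 8 * γ * (Kb:ℝ)^n * E.card := by
    nlinarith [mul_nonneg (mul_nonneg hγ0 hKbn.le) hc0, mul_nonneg hγ0 (Nat.cast_nonneg (Fintype.card (∀ i, Fin (K i))) : (0:ℝ) ≤ N)]
  calc (E.card:ℝ) * (4 * (γ * N) / δ ^ 2) = (E.card:ℝ) * (4 * (γ * N)) / δ ^ 2 := by ring
    _ ≤ 8 * γ * (Kb:ℝ)^n * E.card / δ ^ 2 := by gcongr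
end

section
/- Let X₁ and X₂ be finite discrete random variables with alphabets of size at most K (and at least 2), and let 𝒦 = K². Let P and P̃ be two joint pmfs on 𝒳₁×𝒳₂ with all marginal probabilities strictly positive, and let δ = min over i ∈ {1,2} of the minimum over both P and P̃ of the smallest marginal probability of Xᵢ. Let ρ and ρ̃ denote the maximal correlations of (X₁,X₂) under P and P̃ respectively. If max over (x₁,x₂) of |P(x₁,x₂) − P̃(x₁,x₂)| ≤ γ and γ ≤ δ^{3/2}·𝒦^{-1}, then |ρ − ρ̃| ≤ 8·γ·𝒦 / δ². -/
/-- Marginal pmf of the first coordinate. -/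
noncomputable def marg1 {K1 K2 : ℕ} (P : Fin K1 × Fin K2 → ℝ) (j : Fin K1) : ℝ :=
  ∑ j' : Fin K2, P (j, j')

/-- Marginal pmf of the second coordinate. -/
noncomputable def marg2 {K1 K2 : ℕ} (P : Fin K1 × Fin K2 → ℝ) (j' : Fin K2) : ℝ :=
  ∑ j : Fin K1, P (j, j')

/-- The maximal correlation of a bivariate pmf `P`: the supremum of `E[φ₁(X₁)φ₂(X₂)]` over
transformations with zero mean and unit second moment. -/
noncomputable def mcPmf {K1 K2 : ℕ} (P : Fin K1 × Fin K2 → ℝ) : ℝ :=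
  sSup {r : ℝ | ∃ φ₁ : Fin K1 → ℝ, ∃ φ₂ : Fin K2 → ℝ,
    (∑ x : Fin K1 × Fin K2, P x * φ₁ x.1) = 0 ∧
    (∑ x : Fin K1 × Fin K2, P x * φ₂ x.2) = 0 ∧
    (∑ x : Fin K1 × Fin K2, P x * (φ₁ x.1) ^ 2) = 1 ∧
    (∑ x : Fin K1 × Fin K2, P x * (φ₂ x.2) ^ 2) = 1 ∧
    r = ∑ x : Fin K1 × Fin K2, P x * (φ₁ x.1 * φ₂ x.2)}

namespace MCAux

variable {K1 K2 : ℕ}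

/-- The feasible-correlation set. -/
def mcSet (P : Fin K1 × Fin K2 → ℝ) : Set ℝ :=
  {r : ℝ | ∃ φ₁ : Fin K1 → ℝ, ∃ φ₂ : Fin K2 → ℝ,
    (∑ x : Fin K1 × Fin K2, P x * φ₁ x.1) = 0 ∧
    (∑ x : Fin K1 × Fin K2, P x * φ₂ x.2) = 0 ∧
    (∑ x : Fin K1 × Fin K2, P x * (φ₁ x.1) ^ 2) = 1 ∧
    (∑ x : Fin K1 × Fin K2, P x * (φ₂ x.2) ^ 2) = 1 ∧
    r = ∑ x : Fin K1 × Fin K2, P x * (φ₁ x.1 * φ₂ x.2)}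

lemma mcPmf_eq (P : Fin K1 × Fin K2 → ℝ) : mcPmf P = sSup (mcSet P) := rfl

lemma sum_fst (Q : Fin K1 × Fin K2 → ℝ) (f : Fin K1 → ℝ) :
    ∑ x : Fin K1 × Fin K2, Q x * f x.1 = ∑ j : Fin K1, marg1 Q j * f j := by
  rw [Fintype.sum_prod_type]
  simp only [marg1, Finset.sum_mul]

lemma sum_snd (Q : Fin K1 × Fin K2 → ℝ) (f : Fin K2 → ℝ) :
    ∑ x : Fin K1 × Fin K2, Q x * f x.2 = ∑ j' : Fin K2, marg2 Q j' * f j' := by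
  rw [Fintype.sum_prod_type_right]
  simp only [marg2, Finset.sum_mul]

lemma sum_marg1 (Q : Fin K1 × Fin K2 → ℝ) (hQ1 : ∑ x, Q x = 1) :
    ∑ j, marg1 Q j = 1 := by
  rw [← hQ1, Fintype.sum_prod_type]; rfl

lemma sum_marg2 (Q : Fin K1 × Fin K2 → ℝ) (hQ1 : ∑ x, Q x = 1) :
    ∑ j', marg2 Q j' = 1 := by
  rw [← hQ1, Fintype.sum_prod_type_right]; rfl

lemma abs_le_of_sq_le_sq {y M : ℝ} (hM : 0 ≤ M) (h : y ^ 2 ≤ M ^ 2) : |y| ≤ M := by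
  have := Real.sqrt_le_sqrt h
  rwa [Real.sqrt_sq_eq_abs, Real.sqrt_sq hM] at this

/-- Cauchy–Schwarz: any feasible correlation lies in [-1,1]. -/
lemma mem_le_one {P : Fin K1 × Fin K2 → ℝ} (hP0 : ∀ x, 0 ≤ P x) {r : ℝ}
    (hr : r ∈ mcSet P) : |r| ≤ 1 := by
  obtain ⟨φ₁, φ₂, -, -, h3, h4, hre⟩ := hr
  have key : r ^ 2 ≤ 1 := by
    have := Finset.sum_sq_le_sum_mul_sum_of_sq_eq_mul (Finset.univ : Finset (Fin K1 × Fin K2))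
      (r := fun x => P x * (φ₁ x.1 * φ₂ x.2))
      (f := fun x => P x * (φ₁ x.1) ^ 2) (g := fun x => P x * (φ₂ x.2) ^ 2)
      (fun x _ => mul_nonneg (hP0 x) (sq_nonneg _))
      (fun x _ => mul_nonneg (hP0 x) (sq_nonneg _))
      (fun x _ => by ring)
    rw [h3, h4, ← hre] at this
    simpa using this
  have := abs_le_of_sq_le_sq (by norm_num : (0:ℝ) ≤ 1) (by simpa using key)
  simpa using this

lemma bddAbove_mcSet {P : Fin K1 × Fin K2 → ℝ} (hP0 : ∀ x, 0 ≤ P x) :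
    BddAbove (mcSet P) :=
  ⟨1, fun _ hr => (abs_le.mp (mem_le_one hP0 hr)).2⟩

lemma neg_mem {P : Fin K1 × Fin K2 → ℝ} {r : ℝ} (hr : r ∈ mcSet P) : -r ∈ mcSet P := by
  obtain ⟨φ₁, φ₂, h1, h2, h3, h4, hre⟩ := hr
  refine ⟨φ₁, fun j => -φ₂ j, h1, ?_, h3, ?_, ?_⟩
  · have e : ∀ x : Fin K1 × Fin K2, P x * ((fun j => -φ₂ j) x.2) = -(P x * φ₂ x.2) :=
      fun x => by simp
    rw [Finset.sum_congr rfl fun x _ => e x, Finset.sum_neg_distrib, h2, neg_zero]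
  · have e : ∀ x : Fin K1 × Fin K2, P x * ((fun j => -φ₂ j) x.2) ^ 2 = P x * (φ₂ x.2) ^ 2 :=
      fun x => by simp
    rw [Finset.sum_congr rfl fun x _ => e x, h4]
  · have e : ∀ x : Fin K1 × Fin K2, P x * (φ₁ x.1 * ((fun j => -φ₂ j) x.2))
        = -(P x * (φ₁ x.1 * φ₂ x.2)) := fun x => by simp
    rw [Finset.sum_congr rfl fun x _ => e x, Finset.sum_neg_distrib, ← hre]

lemma exists_feasible_fun {n : ℕ} (hn : 2 ≤ n) (μ : Fin n → ℝ) (hμ0 : ∀ j, 0 < μ j)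
    (hμ1 : ∑ j, μ j = 1) :
    ∃ φ : Fin n → ℝ, (∑ j, μ j * φ j) = 0 ∧ (∑ j, μ j * φ j ^ 2) = 1 := by
  set a : Fin n := ⟨0, by omega⟩ with ha
  set b : Fin n := ⟨1, by omega⟩ with hb
  have hab : a ≠ b := by simp [ha, hb, Fin.ext_iff]
  set p : ℝ := μ a with hp
  have hp0 : 0 < p := hμ0 a
  have hp1 : p < 1 := by
    have h2 : μ a + μ b ≤ ∑ j, μ j := by
      rw [← Finset.sum_pair hab]
      exact Finset.sum_le_sum_of_subset_of_nonneg (Finset.subset_univ _)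
        (fun i _ _ => (hμ0 i).le)
    have := hμ0 b
    rw [hμ1] at h2
    linarith
  have hval : 0 < p - p ^ 2 := by nlinarith
  set c : ℝ := (Real.sqrt (p - p ^ 2))⁻¹ with hc
  have hc2 : c ^ 2 = (p - p ^ 2)⁻¹ := by
    rw [hc, inv_pow, Real.sq_sqrt hval.le]
  refine ⟨fun j => ((if j = a then 1 else 0) - p) * c, ?_, ?_⟩
  · have e : ∀ j : Fin n, μ j * (((if j = a then (1:ℝ) else 0) - p) * c)
        = (if j = a then μ j * c else 0) - μ j * (p * c) := by
      intro j
      by_cases h : j = a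
      · rw [if_pos h, if_pos h]; ring
      · rw [if_neg h, if_neg h]; ring
    rw [Finset.sum_congr rfl fun j _ => e j, Finset.sum_sub_distrib,
      Finset.sum_ite_eq' Finset.univ a (fun j => μ j * c), ← Finset.sum_mul, hμ1]
    simp [hp]
  · have e : ∀ j : Fin n, μ j * ((((if j = a then (1:ℝ) else 0) - p) * c) ^ 2)
        = (if j = a then μ j * ((1 - p) ^ 2 * c ^ 2 - p ^ 2 * c ^ 2) else 0)
          + μ j * (p ^ 2 * c ^ 2) := by
      intro j
      by_cases h : j = a
      · rw [if_pos h, if_pos h]; ring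
      · rw [if_neg h, if_neg h]; ring
    rw [Finset.sum_congr rfl fun j _ => e j, Finset.sum_add_distrib,
      Finset.sum_ite_eq' Finset.univ a
        (fun j => μ j * ((1 - p) ^ 2 * c ^ 2 - p ^ 2 * c ^ 2)),
      ← Finset.sum_mul, hμ1]
    simp only [Finset.mem_univ, if_true, one_mul, ← hp]
    have : p * ((1 - p) ^ 2 * c ^ 2 - p ^ 2 * c ^ 2) + p ^ 2 * c ^ 2
        = (p - p ^ 2) * c ^ 2 := by ring
    rw [this, hc2, mul_inv_cancel₀ (ne_of_gt hval)]

lemma nonempty_mcSet (hK1 : 2 ≤ K1) (hK2 : 2 ≤ K2)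
    {Q : Fin K1 × Fin K2 → ℝ} (hQ1 : ∑ x, Q x = 1)
    (hpos1 : ∀ j, 0 < marg1 Q j) (hpos2 : ∀ j', 0 < marg2 Q j') :
    (mcSet Q).Nonempty := by
  obtain ⟨φ₁, hφ₁0, hφ₁1⟩ := exists_feasible_fun hK1 (marg1 Q) hpos1 (sum_marg1 Q hQ1)
  obtain ⟨φ₂, hφ₂0, hφ₂1⟩ := exists_feasible_fun hK2 (marg2 Q) hpos2 (sum_marg2 Q hQ1)
  refine ⟨∑ x : Fin K1 × Fin K2, Q x * (φ₁ x.1 * φ₂ x.2), φ₁, φ₂, ?_, ?_, ?_, ?_, rfl⟩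
  · rw [sum_fst Q φ₁]; exact hφ₁0
  · rw [sum_snd Q φ₂]; exact hφ₂0
  · rw [show (∑ x : Fin K1 × Fin K2, Q x * (φ₁ x.1) ^ 2)
        = ∑ j, marg1 Q j * φ₁ j ^ 2 from sum_fst Q (fun j => φ₁ j ^ 2)]
    exact hφ₁1
  · rw [show (∑ x : Fin K1 × Fin K2, Q x * (φ₂ x.2) ^ 2)
        = ∑ j', marg2 Q j' * φ₂ j' ^ 2 from sum_snd Q (fun j => φ₂ j ^ 2)]
    exact hφ₂1

lemma mcPmf_nonneg (hK1 : 2 ≤ K1) (hK2 : 2 ≤ K2)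
    {Q : Fin K1 × Fin K2 → ℝ} (hQ0 : ∀ x, 0 ≤ Q x) (hQ1 : ∑ x, Q x = 1)
    (hpos1 : ∀ j, 0 < marg1 Q j) (hpos2 : ∀ j', 0 < marg2 Q j') :
    0 ≤ mcPmf Q := by
  obtain ⟨r, hr⟩ := nonempty_mcSet hK1 hK2 hQ1 hpos1 hpos2
  have h1 : r ≤ mcPmf Q := le_csSup (bddAbove_mcSet hQ0) hr
  have h2 : -r ≤ mcPmf Q := le_csSup (bddAbove_mcSet hQ0) (neg_mem hr)
  linarith

lemma phi1_sq_le {Q : Fin K1 × Fin K2 → ℝ} {δ : ℝ} (hδpos : 0 < δ)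
    (hδ : ∀ j, δ ≤ marg1 Q j) {φ : Fin K1 → ℝ}
    (hφ : ∑ x : Fin K1 × Fin K2, Q x * (φ x.1) ^ 2 = 1) :
    ∀ j, δ * φ j ^ 2 ≤ 1 := by
  intro j
  have hs : ∑ j, marg1 Q j * φ j ^ 2 = 1 := by
    rw [← show (∑ x : Fin K1 × Fin K2, Q x * (φ x.1) ^ 2)
        = ∑ j, marg1 Q j * φ j ^ 2 from sum_fst Q (fun j => φ j ^ 2)]
    exact hφ
  have hterm : marg1 Q j * φ j ^ 2 ≤ 1 := by
    rw [← hs]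
    exact Finset.single_le_sum
      (fun i _ => mul_nonneg (le_trans hδpos.le (hδ i)) (sq_nonneg _)) (Finset.mem_univ j)
  nlinarith [hδ j, sq_nonneg (φ j)]

lemma phi2_sq_le {Q : Fin K1 × Fin K2 → ℝ} {δ : ℝ} (hδpos : 0 < δ)
    (hδ : ∀ j', δ ≤ marg2 Q j') {φ : Fin K2 → ℝ}
    (hφ : ∑ x : Fin K1 × Fin K2, Q x * (φ x.2) ^ 2 = 1) :
    ∀ j', δ * φ j' ^ 2 ≤ 1 := by
  intro j'
  have hs : ∑ j', marg2 Q j' * φ j' ^ 2 = 1 := by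
    rw [← show (∑ x : Fin K1 × Fin K2, Q x * (φ x.2) ^ 2)
        = ∑ j', marg2 Q j' * φ j' ^ 2 from sum_snd Q (fun j => φ j ^ 2)]
    exact hφ
  have hterm : marg2 Q j' * φ j' ^ 2 ≤ 1 := by
    rw [← hs]
    exact Finset.single_le_sum
      (fun i _ => mul_nonneg (le_trans hδpos.le (hδ i)) (sq_nonneg _)) (Finset.mem_univ j')
  nlinarith [hδ j', sq_nonneg (φ j')]

lemma sum_diff_le {P Pt : Fin K1 × Fin K2 → ℝ} {γ : ℝ} (hγ : ∀ x, |P x - Pt x| ≤ γ)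
    {f : Fin K1 × Fin K2 → ℝ} {M : ℝ} (hf : ∀ x, |f x| ≤ M) :
    |(∑ x, P x * f x) - ∑ x, Pt x * f x| ≤ (K1 * K2 : ℝ) * (γ * M) := by
  rw [← Finset.sum_sub_distrib]
  calc |∑ x : Fin K1 × Fin K2, (P x * f x - Pt x * f x)|
      ≤ ∑ x : Fin K1 × Fin K2, |P x * f x - Pt x * f x| :=
        Finset.abs_sum_le_sum_abs _ _
    _ ≤ ∑ _x : Fin K1 × Fin K2, γ * M := Finset.sum_le_sum fun x _ => by
        rw [← sub_mul, abs_mul]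
        exact mul_le_mul (hγ x) (hf x) (abs_nonneg _) (le_trans (abs_nonneg _) (hγ x))
    _ = (K1 * K2 : ℝ) * (γ * M) := by
        rw [Finset.sum_const, Finset.card_univ, Fintype.card_prod, Fintype.card_fin,
          Fintype.card_fin, nsmul_eq_mul]
        push_cast
        ring

lemma arith_mul_le {m₁ m₂ ε sqδ δ : ℝ} (h1l : -(ε * sqδ) ≤ m₁) (h1u : m₁ ≤ ε * sqδ)
    (h2l : -(ε * sqδ) ≤ m₂) (h2u : m₂ ≤ ε * sqδ) (hsq : sqδ ^ 2 = δ) (hε0 : 0 ≤ ε)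
    (hεle1 : ε ≤ 71 / 100) (hδhalf : δ ≤ 1 / 2) (hsqpos : 0 < sqδ) : m₁ * m₂ ≤ ε := by
  have h1 : m₁ * m₂ ≤ (ε * sqδ) * (ε * sqδ) := by nlinarith
  have h2 : (ε * sqδ) * (ε * sqδ) = ε ^ 2 * δ := by rw [← hsq]; ring
  have h3 : ε ^ 2 * δ ≤ ε := by nlinarith
  linarith

lemma arith_final {r c ε δ a N : ℝ} (hδpos : 0 < δ) (hδhalf : δ ≤ 1 / 2)
    (hε0 : 0 ≤ ε) (hεle1 : ε ≤ 71 / 100) (hr1 : r ≤ 1) (ha : 0 < a) (haub : a ≤ 1 + ε)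
    (hca : c * a = N) (hN : r - 2 * ε ≤ N) (hNpos : 0 < N) :
    r ≤ c + 8 * ε / δ := by
  have hc0 : 0 < c := by nlinarith
  have hkey : N ≤ c * (1 + ε) := by nlinarith
  have hrc : r ≤ c + 5 * ε := by nlinarith
  have h5 : 5 * ε ≤ 8 * ε / δ := by
    rw [le_div_iff₀ hδpos]; nlinarith
  linarith

set_option maxHeartbeats 1000000 in
lemma mc_le (Kb : ℕ) (hK1 : 2 ≤ K1) (hK2 : 2 ≤ K2) (hK1le : K1 ≤ Kb) (hK2le : K2 ≤ Kb)
    (P Pt : Fin K1 × Fin K2 → ℝ)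
    (hP0 : ∀ x, 0 ≤ P x) (hP1 : ∑ x, P x = 1)
    (hPt0 : ∀ x, 0 ≤ Pt x) (hPt1 : ∑ x, Pt x = 1)
    (hposPt1 : ∀ j, 0 < marg1 Pt j) (hposPt2 : ∀ j', 0 < marg2 Pt j')
    (δ : ℝ) (hδpos : 0 < δ) (hδhalf : δ ≤ 1 / 2)
    (hδP1 : ∀ j, δ ≤ marg1 P j) (hδP2 : ∀ j', δ ≤ marg2 P j')
    (γ : ℝ) (hγ0 : 0 ≤ γ) (hγ : ∀ x, |P x - Pt x| ≤ γ)
    (hεsqδ : γ * (Kb:ℝ)^2 / δ ≤ Real.sqrt δ) :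
    mcPmf P ≤ mcPmf Pt + 8 * γ * (Kb : ℝ) ^ 2 / δ ^ 2 := by
  have hKb2 : (2:ℕ) ≤ Kb := le_trans hK1 hK1le
  have hKb0 : (0:ℝ) < (Kb:ℝ)^2 := by
    have : (2:ℝ) ≤ (Kb:ℝ) := by exact_mod_cast hKb2
    nlinarith
  set sqδ := Real.sqrt δ with hsqδdef
  have hsqpos : 0 < sqδ := Real.sqrt_pos.mpr hδpos
  have hsq : sqδ ^ 2 = δ := Real.sq_sqrt hδpos.le
  set ε := γ * (Kb:ℝ)^2 / δ with hεdef
  have hε0 : 0 ≤ ε := by positivity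
  have hsqle1 : sqδ ≤ 71/100 := by nlinarith
  have hεle1 : ε ≤ 71/100 := le_trans hεsqδ hsqle1
  have hgoal8 : 8 * γ * (Kb:ℝ)^2 / δ^2 = 8 * ε / δ := by
    rw [hεdef]; field_simp
  have hKK : ((K1:ℝ) * K2) ≤ (Kb:ℝ)^2 := by
    have c1 : (K1:ℝ) ≤ Kb := Nat.cast_le.mpr hK1le
    have c2 : (K2:ℝ) ≤ Kb := Nat.cast_le.mpr hK2le
    nlinarith [Nat.cast_nonneg (α := ℝ) K1, Nat.cast_nonneg (α := ℝ) K2]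
  have hPtnonneg := mcPmf_nonneg hK1 hK2 hPt0 hPt1 hposPt1 hposPt2
  have hbddPt := bddAbove_mcSet (P := Pt) hPt0
  rw [mcPmf_eq]
  apply csSup_le (nonempty_mcSet hK1 hK2 hP1 (fun j => lt_of_lt_of_le hδpos (hδP1 j))
    (fun j' => lt_of_lt_of_le hδpos (hδP2 j')))
  intro r hr
  have hr1 : r ≤ 1 := (abs_le.mp (mem_le_one hP0 hr)).2
  obtain ⟨φ₁, φ₂, h1, h2, h3, h4, hre⟩ := hr
  by_cases hcase : r ≤ 2 * ε
  · have h28 : 2 * ε ≤ 8 * ε / δ := by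
      rw [le_div_iff₀ hδpos]; nlinarith
    rw [mcPmf_eq] at hPtnonneg ⊢
    rw [hgoal8]; linarith
  push_neg at hcase
  have hb1 : ∀ j, δ * φ₁ j ^ 2 ≤ 1 := phi1_sq_le hδpos hδP1 h3
  have hb2 : ∀ j', δ * φ₂ j' ^ 2 ≤ 1 := phi2_sq_le hδpos hδP2 h4
  have habs1 : ∀ x : Fin K1 × Fin K2, |φ₁ x.1| ≤ sqδ⁻¹ := by
    intro x
    apply abs_le_of_sq_le_sq (by positivity)
    rw [inv_pow, hsq, inv_eq_one_div, le_div_iff₀ hδpos]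
    linarith [hb1 x.1]
  have habs2 : ∀ x : Fin K1 × Fin K2, |φ₂ x.2| ≤ sqδ⁻¹ := by
    intro x
    apply abs_le_of_sq_le_sq (by positivity)
    rw [inv_pow, hsq, inv_eq_one_div, le_div_iff₀ hδpos]
    linarith [hb2 x.2]
  have habs1sq : ∀ x : Fin K1 × Fin K2, |φ₁ x.1 ^ 2| ≤ δ⁻¹ := by
    intro x
    rw [abs_of_nonneg (sq_nonneg _), inv_eq_one_div, le_div_iff₀ hδpos]
    linarith [hb1 x.1]
  have habs2sq : ∀ x : Fin K1 × Fin K2, |φ₂ x.2 ^ 2| ≤ δ⁻¹ := by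
    intro x
    rw [abs_of_nonneg (sq_nonneg _), inv_eq_one_div, le_div_iff₀ hδpos]
    linarith [hb2 x.2]
  have habsprod : ∀ x : Fin K1 × Fin K2, |φ₁ x.1 * φ₂ x.2| ≤ δ⁻¹ := by
    intro x
    rw [abs_mul]
    calc |φ₁ x.1| * |φ₂ x.2| ≤ sqδ⁻¹ * sqδ⁻¹ :=
          mul_le_mul (habs1 x) (habs2 x) (abs_nonneg _) (by positivity)
      _ = δ⁻¹ := by rw [← mul_inv, ← pow_two, hsq]
  set m₁ := ∑ x : Fin K1 × Fin K2, Pt x * φ₁ x.1 with hm₁def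
  set m₂ := ∑ x : Fin K1 × Fin K2, Pt x * φ₂ x.2 with hm₂def
  set v₁ := ∑ x : Fin K1 × Fin K2, Pt x * (φ₁ x.1) ^ 2 with hv₁def
  set v₂ := ∑ x : Fin K1 × Fin K2, Pt x * (φ₂ x.2) ^ 2 with hv₂def
  set t := ∑ x : Fin K1 × Fin K2, Pt x * (φ₁ x.1 * φ₂ x.2) with htdef
  have hKKγ : ∀ M : ℝ, 0 ≤ M → ((K1:ℝ) * K2) * (γ * M) ≤ (Kb:ℝ)^2 * (γ * M) := fun M hM =>
    mul_le_mul_of_nonneg_right hKK (by positivity)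
  have hm₁b : |m₁| ≤ ε * sqδ := by
    have hd := sum_diff_le hγ habs1
    rw [h1, ← hm₁def, zero_sub, abs_neg] at hd
    have he : ε * sqδ = (Kb:ℝ)^2 * (γ * sqδ⁻¹) := by
      rw [hεdef]
      field_simp
      linear_combination γ * hsq
    calc |m₁| ≤ ((K1:ℝ) * K2) * (γ * sqδ⁻¹) := by push_cast at hd ⊢; linarith
      _ ≤ (Kb:ℝ)^2 * (γ * sqδ⁻¹) := hKKγ _ (by positivity)
      _ = ε * sqδ := he.symm
  have hm₂b : |m₂| ≤ ε * sqδ := by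
    have hd := sum_diff_le hγ habs2
    rw [h2, ← hm₂def, zero_sub, abs_neg] at hd
    have he : ε * sqδ = (Kb:ℝ)^2 * (γ * sqδ⁻¹) := by
      rw [hεdef]
      field_simp
      linear_combination γ * hsq
    calc |m₂| ≤ ((K1:ℝ) * K2) * (γ * sqδ⁻¹) := by push_cast at hd ⊢; linarith
      _ ≤ (Kb:ℝ)^2 * (γ * sqδ⁻¹) := hKKγ _ (by positivity)
      _ = ε * sqδ := he.symm
  have heps : ε = (Kb:ℝ)^2 * (γ * δ⁻¹) := by rw [hεdef]; field_simp
  have hv₁b : |1 - v₁| ≤ ε := by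
    have hd := sum_diff_le hγ habs1sq
    rw [h3, ← hv₁def] at hd
    calc |1 - v₁| ≤ ((K1:ℝ) * K2) * (γ * δ⁻¹) := by push_cast at hd ⊢; linarith
      _ ≤ (Kb:ℝ)^2 * (γ * δ⁻¹) := hKKγ _ (by positivity)
      _ = ε := heps.symm
  have hv₂b : |1 - v₂| ≤ ε := by
    have hd := sum_diff_le hγ habs2sq
    rw [h4, ← hv₂def] at hd
    calc |1 - v₂| ≤ ((K1:ℝ) * K2) * (γ * δ⁻¹) := by push_cast at hd ⊢; linarith
      _ ≤ (Kb:ℝ)^2 * (γ * δ⁻¹) := hKKγ _ (by positivity)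
      _ = ε := heps.symm
  have htb : |r - t| ≤ ε := by
    have hd := sum_diff_le hγ habsprod
    rw [← hre, ← htdef] at hd
    calc |r - t| ≤ ((K1:ℝ) * K2) * (γ * δ⁻¹) := by push_cast at hd ⊢; linarith
      _ ≤ (Kb:ℝ)^2 * (γ * δ⁻¹) := hKKγ _ (by positivity)
      _ = ε := heps.symm
  have hεsqnn : 0 ≤ ε * sqδ := by positivity
  have hm₁sq : m₁ ^ 2 ≤ ε ^ 2 * δ := by
    calc m₁ ^ 2 = |m₁| ^ 2 := (sq_abs m₁).symm
      _ ≤ (ε * sqδ) ^ 2 := pow_le_pow_left₀ (abs_nonneg _) hm₁b 2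
      _ = ε ^ 2 * δ := by rw [mul_pow, hsq]
  have hm₂sq : m₂ ^ 2 ≤ ε ^ 2 * δ := by
    calc m₂ ^ 2 = |m₂| ^ 2 := (sq_abs m₂).symm
      _ ≤ (ε * sqδ) ^ 2 := pow_le_pow_left₀ (abs_nonneg _) hm₂b 2
      _ = ε ^ 2 * δ := by rw [mul_pow, hsq]
  have hε2 : ε ^ 2 ≤ δ := by
    calc ε ^ 2 ≤ sqδ ^ 2 := pow_le_pow_left₀ hε0 hεsqδ 2
      _ = δ := hsq
  have hεδ : ε ^ 2 * δ ≤ δ ^ 2 := by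
    calc ε ^ 2 * δ ≤ δ * δ := mul_le_mul_of_nonneg_right hε2 hδpos.le
      _ = δ ^ 2 := (sq δ).symm
  have hδsq : δ ^ 2 ≤ 1 / 4 := by
    calc δ ^ 2 = δ * δ := sq δ
      _ ≤ (1/2) * (1/2) := mul_le_mul hδhalf hδhalf hδpos.le (by norm_num)
      _ = 1/4 := by norm_num
  have hv₁lb : 1 - ε ≤ v₁ := by have := abs_le.mp hv₁b; linarith [this.2]
  have hv₁ub : v₁ ≤ 1 + ε := by have := abs_le.mp hv₁b; linarith [this.1]
  have hv₂lb : 1 - ε ≤ v₂ := by have := abs_le.mp hv₂b; linarith [this.2]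
  have hv₂ub : v₂ ≤ 1 + ε := by have := abs_le.mp hv₂b; linarith [this.1]
  have hs₁pos : 0 < v₁ - m₁ ^ 2 := by linarith
  have hs₂pos : 0 < v₂ - m₂ ^ 2 := by linarith
  set s₁ := Real.sqrt (v₁ - m₁ ^ 2) with hs₁def
  set s₂ := Real.sqrt (v₂ - m₂ ^ 2) with hs₂def
  have hs₁p : 0 < s₁ := Real.sqrt_pos.mpr hs₁pos
  have hs₂p : 0 < s₂ := Real.sqrt_pos.mpr hs₂pos
  have hs₁sq : s₁ ^ 2 = v₁ - m₁ ^ 2 := Real.sq_sqrt hs₁pos.le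
  have hs₂sq : s₂ ^ 2 = v₂ - m₂ ^ 2 := Real.sq_sqrt hs₂pos.le
  have haub : s₁ * s₂ ≤ 1 + ε := by
    have e1 : v₁ - m₁ ^ 2 ≤ 1 + ε := by linarith [sq_nonneg m₁]
    have e2 : v₂ - m₂ ^ 2 ≤ 1 + ε := by linarith [sq_nonneg m₂]
    have emul : (v₁ - m₁ ^ 2) * (v₂ - m₂ ^ 2) ≤ (1 + ε) * (1 + ε) :=
      mul_le_mul e1 e2 hs₂pos.le (by linarith)
    calc s₁ * s₂ = Real.sqrt ((v₁ - m₁ ^ 2) * (v₂ - m₂ ^ 2)) :=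
          (Real.sqrt_mul hs₁pos.le _).symm
      _ ≤ Real.sqrt ((1 + ε) * (1 + ε)) := Real.sqrt_le_sqrt emul
      _ = 1 + ε := by
          rw [← sq (1 + ε)]
          exact Real.sqrt_sq (by linarith)
  set ψ₁ : Fin K1 → ℝ := fun j => (φ₁ j - m₁) / s₁ with hψ₁def
  set ψ₂ : Fin K2 → ℝ := fun j => (φ₂ j - m₂) / s₂ with hψ₂def
  have hsum1 : ∑ x : Fin K1 × Fin K2, Pt x * ψ₁ x.1 = 0 := by
    have e : ∀ x : Fin K1 × Fin K2, Pt x * ψ₁ x.1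
        = (Pt x * φ₁ x.1) * s₁⁻¹ - Pt x * (m₁ * s₁⁻¹) := by
      intro x; rw [hψ₁def]; ring
    rw [Finset.sum_congr rfl fun x _ => e x, Finset.sum_sub_distrib, ← Finset.sum_mul,
      ← Finset.sum_mul, ← hm₁def, hPt1]
    ring
  have hsum2 : ∑ x : Fin K1 × Fin K2, Pt x * ψ₂ x.2 = 0 := by
    have e : ∀ x : Fin K1 × Fin K2, Pt x * ψ₂ x.2
        = (Pt x * φ₂ x.2) * s₂⁻¹ - Pt x * (m₂ * s₂⁻¹) := by
      intro x; rw [hψ₂def]; ring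
    rw [Finset.sum_congr rfl fun x _ => e x, Finset.sum_sub_distrib, ← Finset.sum_mul,
      ← Finset.sum_mul, ← hm₂def, hPt1]
    ring
  have hsumsq1 : ∑ x : Fin K1 × Fin K2, Pt x * (ψ₁ x.1) ^ 2 = 1 := by
    have e : ∀ x : Fin K1 × Fin K2, Pt x * (ψ₁ x.1) ^ 2
        = (Pt x * (φ₁ x.1) ^ 2) * (s₁ ^ 2)⁻¹ - (Pt x * φ₁ x.1) * (2 * m₁ * (s₁ ^ 2)⁻¹)
          + Pt x * (m₁ ^ 2 * (s₁ ^ 2)⁻¹) := by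
      intro x; rw [hψ₁def]; ring
    rw [Finset.sum_congr rfl fun x _ => e x, Finset.sum_add_distrib, Finset.sum_sub_distrib,
      ← Finset.sum_mul, ← Finset.sum_mul, ← Finset.sum_mul, ← hm₁def, ← hv₁def, hPt1, hs₁sq]
    have hne : v₁ - m₁ ^ 2 ≠ 0 := ne_of_gt hs₁pos
    field_simp
    ring
  have hsumsq2 : ∑ x : Fin K1 × Fin K2, Pt x * (ψ₂ x.2) ^ 2 = 1 := by
    have e : ∀ x : Fin K1 × Fin K2, Pt x * (ψ₂ x.2) ^ 2
        = (Pt x * (φ₂ x.2) ^ 2) * (s₂ ^ 2)⁻¹ - (Pt x * φ₂ x.2) * (2 * m₂ * (s₂ ^ 2)⁻¹)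
          + Pt x * (m₂ ^ 2 * (s₂ ^ 2)⁻¹) := by
      intro x; rw [hψ₂def]; ring
    rw [Finset.sum_congr rfl fun x _ => e x, Finset.sum_add_distrib, Finset.sum_sub_distrib,
      ← Finset.sum_mul, ← Finset.sum_mul, ← Finset.sum_mul, ← hm₂def, ← hv₂def, hPt1, hs₂sq]
    have hne : v₂ - m₂ ^ 2 ≠ 0 := ne_of_gt hs₂pos
    field_simp
    ring
  have hcross : ∑ x : Fin K1 × Fin K2, Pt x * (ψ₁ x.1 * ψ₂ x.2)
      = (t - m₁ * m₂) * (s₁ * s₂)⁻¹ := by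
    have e : ∀ x : Fin K1 × Fin K2, Pt x * (ψ₁ x.1 * ψ₂ x.2)
        = (Pt x * (φ₁ x.1 * φ₂ x.2)) * (s₁ * s₂)⁻¹
          - (Pt x * φ₁ x.1) * (m₂ * (s₁ * s₂)⁻¹)
          - (Pt x * φ₂ x.2) * (m₁ * (s₁ * s₂)⁻¹)
          + Pt x * (m₁ * m₂ * (s₁ * s₂)⁻¹) := by
      intro x; rw [hψ₁def, hψ₂def]; ring
    rw [Finset.sum_congr rfl fun x _ => e x, Finset.sum_add_distrib, Finset.sum_sub_distrib,
      Finset.sum_sub_distrib, ← Finset.sum_mul, ← Finset.sum_mul, ← Finset.sum_mul,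
      ← Finset.sum_mul, ← hm₁def, ← hm₂def, ← htdef, hPt1]
    ring
  have hmem : (t - m₁ * m₂) * (s₁ * s₂)⁻¹ ∈ mcSet Pt :=
    ⟨ψ₁, ψ₂, hsum1, hsum2, hsumsq1, hsumsq2, hcross.symm⟩
  have hcle : (t - m₁ * m₂) * (s₁ * s₂)⁻¹ ≤ mcPmf Pt := by
    rw [mcPmf_eq]; exact le_csSup hbddPt hmem
  -- now pure scalar arithmetic: forget the definitions of the statistics
  set c := (t - m₁ * m₂) * (s₁ * s₂)⁻¹ with hcdef
  have htb' := abs_le.mp htb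
  have hm₁b' := abs_le.mp hm₁b
  have hm₂b' := abs_le.mp hm₂b
  clear_value m₁ m₂ v₁ v₂ t s₁ s₂ ψ₁ ψ₂ c
  clear hγ h1 h2 h3 h4 hre hb1 hb2 habs1 habs2 habs1sq habs2sq habsprod hsum1 hsum2
    hsumsq1 hsumsq2 hcross hmem hm₁def hm₂def hv₁def hv₂def htdef hψ₁def hψ₂def
    hm₁b hm₂b hv₁b hv₂b htb hP0 hP1 hPt0 hPt1 hposPt1 hposPt2 hδP1 hδP2
  have hm₁m₂ : m₁ * m₂ ≤ ε :=
    arith_mul_le hm₁b'.1 hm₁b'.2 hm₂b'.1 hm₂b'.2 hsq hε0 hεle1 hδhalf hsqpos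
  have hN : r - 2 * ε ≤ t - m₁ * m₂ := by linarith [htb'.1]
  have hNpos : 0 < t - m₁ * m₂ := lt_of_lt_of_le (by linarith) hN
  have ha : 0 < s₁ * s₂ := mul_pos hs₁p hs₂p
  have hca : c * (s₁ * s₂) = t - m₁ * m₂ := by
    rw [hcdef]
    field_simp
  have hfin : r ≤ c + 8 * ε / δ :=
    arith_final hδpos hδhalf hε0 hεle1 hr1 ha haub hca hN hNpos
  rw [hgoal8]
  linarith

end MCAux

/-- Bivariate maximal correlation is continuous in the joint distribution:
if `‖P − P̃‖_∞ ≤ γ ≤ δ^{3/2}·𝒦⁻¹` with `𝒦 = K²`, then `|ρ − ρ̃| ≤ 8·γ·𝒦/δ²`. -/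
theorem mc_continuous_in_distribution
    (Kb K1 K2 : ℕ) (hK1 : 2 ≤ K1) (hK2 : 2 ≤ K2) (hK1le : K1 ≤ Kb) (hK2le : K2 ≤ Kb)
    (P Pt : Fin K1 × Fin K2 → ℝ)
    (hP0 : ∀ x, 0 ≤ P x) (hP1 : ∑ x, P x = 1)
    (hPt0 : ∀ x, 0 ≤ Pt x) (hPt1 : ∑ x, Pt x = 1)
    (hposP1 : ∀ j, 0 < marg1 P j) (hposP2 : ∀ j', 0 < marg2 P j')
    (hposPt1 : ∀ j, 0 < marg1 Pt j) (hposPt2 : ∀ j', 0 < marg2 Pt j')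
    (δ : ℝ)
    (hδle1 : ∀ j, δ ≤ marg1 P j ∧ δ ≤ marg1 Pt j)
    (hδle2 : ∀ j', δ ≤ marg2 P j' ∧ δ ≤ marg2 Pt j')
    (hδmem : (∃ j, δ = marg1 P j ∨ δ = marg1 Pt j) ∨
             (∃ j', δ = marg2 P j' ∨ δ = marg2 Pt j'))
    (γ : ℝ)
    (hγ : ∀ x, |P x - Pt x| ≤ γ)
    (hγδ : γ ≤ δ ^ ((3 : ℝ) / 2) * ((Kb : ℝ) ^ 2)⁻¹) :
    |mcPmf P - mcPmf Pt| ≤ 8 * γ * (Kb : ℝ) ^ 2 / δ ^ 2 := by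
  have hδpos : 0 < δ := by
    rcases hδmem with ⟨j, h | h⟩ | ⟨j', h | h⟩
    · rw [h]; exact hposP1 j
    · rw [h]; exact hposPt1 j
    · rw [h]; exact hposP2 j'
    · rw [h]; exact hposPt2 j'
  have hδhalf : δ ≤ 1 / 2 := by
    have hab : (⟨0, by omega⟩ : Fin K1) ≠ (⟨1, by omega⟩ : Fin K1) := by
      simp [Fin.ext_iff]
    have hsum := MCAux.sum_marg1 P hP1
    have h2 : marg1 P ⟨0, by omega⟩ + marg1 P ⟨1, by omega⟩ ≤ 1 := by
      rw [← hsum, ← Finset.sum_pair hab]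
      exact Finset.sum_le_sum_of_subset_of_nonneg (Finset.subset_univ _)
        (fun i _ _ => (hposP1 i).le)
    linarith [(hδle1 ⟨0, by omega⟩).1, (hδle1 ⟨1, by omega⟩).1]
  have hγ0 : 0 ≤ γ := le_trans (abs_nonneg _) (hγ (⟨0, by omega⟩, ⟨0, by omega⟩))
  have hKb0 : (0:ℝ) < (Kb:ℝ)^2 := by
    have : (2:ℝ) ≤ (Kb:ℝ) := by exact_mod_cast le_trans hK1 hK1le
    nlinarith
  have hεsqδ : γ * (Kb:ℝ)^2 / δ ≤ Real.sqrt δ := by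
    have h32 : δ ^ ((3:ℝ)/2) = δ * Real.sqrt δ := by
      rw [show (3:ℝ)/2 = 1 + 1/2 by norm_num, Real.rpow_add hδpos, Real.rpow_one,
        ← Real.sqrt_eq_rpow]
    rw [div_le_iff₀ hδpos]
    have hmul := mul_le_mul_of_nonneg_right hγδ hKb0.le
    rw [h32] at hmul
    calc γ * (Kb:ℝ)^2 ≤ δ * Real.sqrt δ * ((Kb:ℝ)^2)⁻¹ * (Kb:ℝ)^2 := hmul
      _ = Real.sqrt δ * δ := by rw [mul_assoc (δ * Real.sqrt δ), inv_mul_cancel₀ hKb0.ne', mul_one, mul_comm]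
  have hle1 := MCAux.mc_le Kb hK1 hK2 hK1le hK2le P Pt hP0 hP1 hPt0 hPt1 hposPt1 hposPt2
    δ hδpos hδhalf (fun j => (hδle1 j).1) (fun j' => (hδle2 j').1) γ hγ0 hγ hεsqδ
  have hle2 := MCAux.mc_le Kb hK1 hK2 hK1le hK2le Pt P hPt0 hPt1 hP0 hP1 hposP1 hposP2
    δ hδpos hδhalf (fun j => (hδle1 j).2) (fun j' => (hδle2 j').2) γ hγ0
    (fun x => by rw [abs_sub_comm]; exact hγ x) hεsqδ
  rw [abs_sub_le_iff]
  constructor <;> linarith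
end

section
/- Let P and P̃ be two joint pmfs on 𝒳ᵢ × 𝒳_{i'} (finite alphabets) with all marginal probabilities strictly positive, let δ be the minimum marginal probability of any element of 𝒳ᵢ or 𝒳_{i'} under either P or P̃, and let K = max{|𝒳ᵢ|, |𝒳_{i'}|}. Let Q_{i,i'} and Q̃_{i,i'} be the Q-matrices of P and P̃, and let D_{Xᵢ}(P) denote the diagonal matrix of the marginal pmf of Xᵢ under P. Then ‖Q_{i,i'} − Q̃_{i,i'}‖₂ ≤ (√K/(2δ²))·‖D_{Xᵢ}(P) − D_{Xᵢ}(P̃)‖_∞ + (√K/(2δ²))·‖D_{X_{i'}}(P) − D_{X_{i'}}(P̃)‖_∞ + (√K/δ)·‖P − P̃‖_∞, where P and P̃ are viewed as matrices, ‖·‖₂ is the spectral norm, and ‖·‖_∞ is the induced ∞-norm (maximum absolute row sum). -/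
open Matrix

/-- Row marginal of a joint pmf viewed as a matrix. -/
noncomputable def rowMarg {K1 K2 : ℕ} (P : Matrix (Fin K1) (Fin K2) ℝ) (j : Fin K1) : ℝ :=
  ∑ b, P j b

/-- Column marginal of a joint pmf viewed as a matrix. -/
noncomputable def colMarg {K1 K2 : ℕ} (P : Matrix (Fin K1) (Fin K2) ℝ) (j' : Fin K2) : ℝ :=
  ∑ a, P a j'

/-- The `Q`-matrix `D_{Xᵢ}(P)^{-1/2} P D_{X_{i'}}(P)^{-1/2}` of a joint pmf `P`. -/
noncomputable def Qmat {K1 K2 : ℕ} (P : Matrix (Fin K1) (Fin K2) ℝ) :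
    Matrix (Fin K1) (Fin K2) ℝ :=
  fun j j' => P j j' / Real.sqrt (rowMarg P j * colMarg P j')

/-- Spectral norm of a real matrix: supremum of `‖Mx‖₂` over unit vectors `x`. -/
noncomputable def specNorm {K1 K2 : ℕ} (M : Matrix (Fin K1) (Fin K2) ℝ) : ℝ :=
  sSup {t : ℝ | ∃ x : Fin K2 → ℝ, (∑ j', (x j') ^ 2 = 1) ∧
    t = Real.sqrt (∑ j, (M.mulVec x j) ^ 2)}

/-- Induced `∞`-norm of a real matrix: maximum absolute row sum. -/
noncomputable def infNorm {K1 K2 : ℕ} (M : Matrix (Fin K1) (Fin K2) ℝ) : ℝ :=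
  sSup (Set.range fun j => ∑ j', |M j j'|)

lemma euclid_tri {ι : Type*} [Fintype ι] (f g : ι → ℝ) :
    Real.sqrt (∑ i, (f i + g i) ^ 2) ≤ Real.sqrt (∑ i, f i ^ 2) + Real.sqrt (∑ i, g i ^ 2) := by
  have h := norm_add_le ((WithLp.equiv 2 (ι → ℝ)).symm f) ((WithLp.equiv 2 (ι → ℝ)).symm g)
  simpa [EuclideanSpace.norm_eq, Real.norm_eq_abs, sq_abs] using h

lemma key_frac (δ a b c : ℝ) (hδ : 0 < δ) (ha : δ ≤ a) (hb : δ ≤ b) (hc : δ ≤ c) :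
    |1 / Real.sqrt a - 1 / Real.sqrt b| / Real.sqrt c ≤ |a - b| / (2 * δ ^ 2) := by
  have hsd : (0:ℝ) < Real.sqrt δ := Real.sqrt_pos.2 hδ
  have hsa := Real.sqrt_le_sqrt ha
  have hsb := Real.sqrt_le_sqrt hb
  have hsc := Real.sqrt_le_sqrt hc
  have hap : (0:ℝ) < Real.sqrt a := lt_of_lt_of_le hsd hsa
  have hbp : (0:ℝ) < Real.sqrt b := lt_of_lt_of_le hsd hsb
  have hcp : (0:ℝ) < Real.sqrt c := lt_of_lt_of_le hsd hsc
  have hδsq : Real.sqrt δ ^ 2 = δ := Real.sq_sqrt hδ.le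
  have hab2 : Real.sqrt a ^ 2 = a := Real.sq_sqrt (hδ.le.trans ha)
  have hbb2 : Real.sqrt b ^ 2 = b := Real.sq_sqrt (hδ.le.trans hb)
  have e0 : (Real.sqrt b - Real.sqrt a) * (Real.sqrt b + Real.sqrt a) = b - a := by
    linear_combination hbb2 - hab2
  have hdpos : (0:ℝ) < Real.sqrt a * Real.sqrt b * (Real.sqrt a + Real.sqrt b) :=
    mul_pos (mul_pos hap hbp) (add_pos hap hbp)
  have hkey : 1 / Real.sqrt a - 1 / Real.sqrt b
      = (b - a) / (Real.sqrt a * Real.sqrt b * (Real.sqrt a + Real.sqrt b)) := by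
    rw [div_sub_div _ _ hap.ne' hbp.ne', div_eq_div_iff (by positivity) hdpos.ne']
    linear_combination (Real.sqrt a * Real.sqrt b) * e0
  have hden : 2 * δ ^ 2 ≤ Real.sqrt a * Real.sqrt b * (Real.sqrt a + Real.sqrt b) * Real.sqrt c := by
    have h1 : Real.sqrt δ * Real.sqrt δ * (Real.sqrt δ + Real.sqrt δ) * Real.sqrt δ
        ≤ Real.sqrt a * Real.sqrt b * (Real.sqrt a + Real.sqrt b) * Real.sqrt c := by
      gcongr <;> positivity
    have h2 : Real.sqrt δ * Real.sqrt δ * (Real.sqrt δ + Real.sqrt δ) * Real.sqrt δ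
        = 2 * δ ^ 2 := by linear_combination (2 * (Real.sqrt δ ^ 2 + δ)) * hδsq
    linarith
  calc |1 / Real.sqrt a - 1 / Real.sqrt b| / Real.sqrt c
      = |(b - a) / (Real.sqrt a * Real.sqrt b * (Real.sqrt a + Real.sqrt b))| / Real.sqrt c := by
        rw [hkey]
    _ = |a - b| / (Real.sqrt a * Real.sqrt b * (Real.sqrt a + Real.sqrt b) * Real.sqrt c) := by
        rw [abs_div, abs_of_pos hdpos, abs_sub_comm, div_div]
    _ ≤ |a - b| / (2 * δ ^ 2) :=
        div_le_div_of_nonneg_left (abs_nonneg _) (by positivity) hden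

lemma cs_bound {n m : ℕ} (M : Matrix (Fin n) (Fin m) ℝ) (x : Fin m → ℝ)
    (hx : ∑ j', (x j') ^ 2 = 1) :
    Real.sqrt (∑ j, (M.mulVec x j) ^ 2) ≤ Real.sqrt (∑ j, ∑ j', (M j j') ^ 2) := by
  apply Real.sqrt_le_sqrt
  apply Finset.sum_le_sum
  intro j _
  have h := Finset.sum_mul_sq_le_sq_mul_sq Finset.univ (fun j' => M j j') x
  simpa [Matrix.mulVec, dotProduct, hx] using h

set_option maxHeartbeats 2000000 in
/-- Bound on the spectral-norm difference of the `Q`-matrices of two joint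
pmfs in terms of the `∞`-norm differences of their marginal diagonal matrices and of the
pmfs themselves. -/
theorem qmat_diff_bound
    (K1 K2 : ℕ) (hK1 : 0 < K1) (hK2 : 0 < K2)
    (P Pt : Matrix (Fin K1) (Fin K2) ℝ)
    (hP0 : ∀ j j', 0 ≤ P j j') (hP1 : ∑ j, ∑ j', P j j' = 1)
    (hPt0 : ∀ j j', 0 ≤ Pt j j') (hPt1 : ∑ j, ∑ j', Pt j j' = 1)
    (hrP : ∀ j, 0 < rowMarg P j) (hcP : ∀ j', 0 < colMarg P j')
    (hrPt : ∀ j, 0 < rowMarg Pt j) (hcPt : ∀ j', 0 < colMarg Pt j')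
    (δ : ℝ)
    (hδler : ∀ j, δ ≤ rowMarg P j ∧ δ ≤ rowMarg Pt j)
    (hδlec : ∀ j', δ ≤ colMarg P j' ∧ δ ≤ colMarg Pt j')
    (hδmem : (∃ j, δ = rowMarg P j ∨ δ = rowMarg Pt j) ∨
             (∃ j', δ = colMarg P j' ∨ δ = colMarg Pt j')) :
    specNorm (Qmat P - Qmat Pt) ≤
      (Real.sqrt ((max K1 K2 : ℕ) : ℝ) / (2 * δ ^ 2)) *
        infNorm (Matrix.diagonal (rowMarg P) - Matrix.diagonal (rowMarg Pt)) +
      (Real.sqrt ((max K1 K2 : ℕ) : ℝ) / (2 * δ ^ 2)) *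
        infNorm (Matrix.diagonal (colMarg P) - Matrix.diagonal (colMarg Pt)) +
      (Real.sqrt ((max K1 K2 : ℕ) : ℝ) / δ) * infNorm (P - Pt) := by
  have hδ : 0 < δ := by
    rcases hδmem with ⟨j, h | h⟩ | ⟨j', h | h⟩
    · exact h ▸ hrP j
    · exact h ▸ hrPt j
    · exact h ▸ hcP j'
    · exact h ▸ hcPt j'
  set S : ℝ := Real.sqrt ((max K1 K2 : ℕ) : ℝ) with hSdef
  have hS1 : (1:ℝ) ≤ S := by
    have h1 : (1:ℝ) ≤ ((max K1 K2 : ℕ) : ℝ) := by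
      exact_mod_cast le_trans hK1 (le_max_left K1 K2)
    calc (1:ℝ) = Real.sqrt 1 := (Real.sqrt_one).symm
      _ ≤ S := Real.sqrt_le_sqrt h1
  have hSK1 : Real.sqrt (K1 : ℝ) ≤ S :=
    Real.sqrt_le_sqrt (by exact_mod_cast le_max_left K1 K2)
  set Dr := infNorm (Matrix.diagonal (rowMarg P) - Matrix.diagonal (rowMarg Pt)) with hDrdef
  set Dc := infNorm (Matrix.diagonal (colMarg P) - Matrix.diagonal (colMarg Pt)) with hDcdef
  set Dp := infNorm (P - Pt) with hDpdef
  -- pointwise bounds from infNorms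
  have hDrj : ∀ j, |rowMarg P j - rowMarg Pt j| ≤ Dr := by
    intro j
    have hle := le_csSup (Set.Finite.bddAbove (Set.finite_range
      (fun j => ∑ j'', |(Matrix.diagonal (rowMarg P) - Matrix.diagonal (rowMarg Pt)) j j''|)))
      (Set.mem_range_self j)
    have heq : (∑ j'', |(Matrix.diagonal (rowMarg P) - Matrix.diagonal (rowMarg Pt)) j j''|)
        = |rowMarg P j - rowMarg Pt j| := by
      rw [Finset.sum_eq_single j]
      · simp [Matrix.sub_apply]
      · intro b _ hb
        simp [Matrix.sub_apply, Matrix.diagonal_apply_ne _ (Ne.symm hb)]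
      · simp
    rw [heq] at hle
    exact hle
  have hDcj : ∀ j', |colMarg P j' - colMarg Pt j'| ≤ Dc := by
    intro j'
    have hle := le_csSup (Set.Finite.bddAbove (Set.finite_range
      (fun j => ∑ j'', |(Matrix.diagonal (colMarg P) - Matrix.diagonal (colMarg Pt)) j j''|)))
      (Set.mem_range_self j')
    have heq : (∑ j'', |(Matrix.diagonal (colMarg P) - Matrix.diagonal (colMarg Pt)) j' j''|)
        = |colMarg P j' - colMarg Pt j'| := by
      rw [Finset.sum_eq_single j']
      · simp [Matrix.sub_apply]
      · intro b _ hb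
        simp [Matrix.sub_apply, Matrix.diagonal_apply_ne _ (Ne.symm hb)]
      · simp
    rw [heq] at hle
    exact hle
  have hDpj : ∀ j, (∑ j', |(P - Pt) j j'|) ≤ Dp := by
    intro j
    exact le_csSup (Set.Finite.bddAbove (Set.finite_range _)) (Set.mem_range_self j)
  have hDr0 : 0 ≤ Dr := le_trans (abs_nonneg _) (hDrj ⟨0, hK1⟩)
  have hDc0 : 0 ≤ Dc := le_trans (abs_nonneg _) (hDcj ⟨0, hK2⟩)
  have hDp0 : 0 ≤ Dp :=
    le_trans (Finset.sum_nonneg fun _ _ => abs_nonneg _) (hDpj ⟨0, hK1⟩)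
  -- decomposition
  set A : Matrix (Fin K1) (Fin K2) ℝ := fun j j' =>
    (P j j' - Pt j j') / (Real.sqrt (rowMarg P j) * Real.sqrt (colMarg P j')) with hAdef
  set B : Matrix (Fin K1) (Fin K2) ℝ := fun j j' =>
    Pt j j' * ((1 / Real.sqrt (rowMarg P j) - 1 / Real.sqrt (rowMarg Pt j))
      / Real.sqrt (colMarg P j')) with hBdef
  set C : Matrix (Fin K1) (Fin K2) ℝ := fun j j' =>
    Pt j j' * ((1 / Real.sqrt (colMarg P j') - 1 / Real.sqrt (colMarg Pt j'))
      / Real.sqrt (rowMarg Pt j)) with hCdef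
  have hdecomp : Qmat P - Qmat Pt = A + B + C := by
    funext j j'
    have h1 : Real.sqrt (rowMarg P j * colMarg P j')
        = Real.sqrt (rowMarg P j) * Real.sqrt (colMarg P j') := Real.sqrt_mul (hrP j).le _
    have h2 : Real.sqrt (rowMarg Pt j * colMarg Pt j')
        = Real.sqrt (rowMarg Pt j) * Real.sqrt (colMarg Pt j') := Real.sqrt_mul (hrPt j).le _
    have p1 : (0:ℝ) < Real.sqrt (rowMarg P j) := Real.sqrt_pos.2 (hrP j)
    have p2 : (0:ℝ) < Real.sqrt (colMarg P j') := Real.sqrt_pos.2 (hcP j')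
    have p3 : (0:ℝ) < Real.sqrt (rowMarg Pt j) := Real.sqrt_pos.2 (hrPt j)
    have p4 : (0:ℝ) < Real.sqrt (colMarg Pt j') := Real.sqrt_pos.2 (hcPt j')
    rw [Matrix.add_apply, Matrix.add_apply]
    simp only [Matrix.sub_apply, Matrix.add_apply, Qmat, hAdef, hBdef, hCdef, h1, h2]
    field_simp
    ring
  set fA := Real.sqrt (∑ j, ∑ j', (A j j') ^ 2) with hfAdef
  set fB := Real.sqrt (∑ j, ∑ j', (B j j') ^ 2) with hfBdef
  set fC := Real.sqrt (∑ j, ∑ j', (C j j') ^ 2) with hfCdef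
  have hspec : specNorm (Qmat P - Qmat Pt) ≤ fA + fB + fC := by
    apply Real.sSup_le
    · rintro t ⟨x, hx, rfl⟩
      have hmv : (Qmat P - Qmat Pt).mulVec x
          = fun j => A.mulVec x j + (B.mulVec x j + C.mulVec x j) := by
        funext j
        rw [hdecomp]
        simp [Matrix.add_mulVec, add_assoc]
      rw [hmv]
      calc Real.sqrt (∑ j, (A.mulVec x j + (B.mulVec x j + C.mulVec x j)) ^ 2)
          ≤ Real.sqrt (∑ j, (A.mulVec x j) ^ 2)
            + Real.sqrt (∑ j, (B.mulVec x j + C.mulVec x j) ^ 2) := euclid_tri _ _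
        _ ≤ Real.sqrt (∑ j, (A.mulVec x j) ^ 2)
            + (Real.sqrt (∑ j, (B.mulVec x j) ^ 2) + Real.sqrt (∑ j, (C.mulVec x j) ^ 2)) := by
            have := euclid_tri (B.mulVec x) (C.mulVec x)
            linarith
        _ ≤ fA + (fB + fC) := by
            have h1 := cs_bound A x hx
            have h2 := cs_bound B x hx
            have h3 := cs_bound C x hx
            gcongr
        _ = fA + fB + fC := by ring
    · positivity
  -- bound fA
  have hfA : fA ≤ S / δ * Dp := by
    have hrow : ∀ j, (∑ j', (A j j') ^ 2) ≤ Dp ^ 2 / δ ^ 2 := by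
      intro j
      have step1 : (∑ j', (A j j') ^ 2) ≤ (∑ j', (P j j' - Pt j j') ^ 2) / δ ^ 2 := by
        rw [Finset.sum_div]
        apply Finset.sum_le_sum
        intro j' _
        have hden : δ ^ 2 ≤ rowMarg P j * colMarg P j' := by
          nlinarith [(hδler j).1, (hδlec j').1, hδ]
        have hA2 : A j j' ^ 2 = (P j j' - Pt j j') ^ 2 / (rowMarg P j * colMarg P j') := by
          rw [hAdef]
          rw [div_pow, mul_pow, Real.sq_sqrt (hrP j).le, Real.sq_sqrt (hcP j').le]
        rw [hA2]
        exact div_le_div_of_nonneg_left (sq_nonneg _) (by positivity) hden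
      have step2 : (∑ j', (P j j' - Pt j j') ^ 2) ≤ Dp ^ 2 := by
        have h1 : (∑ j', (P j j' - Pt j j') ^ 2) = ∑ j', |(P - Pt) j j'| ^ 2 := by
          simp [Matrix.sub_apply, sq_abs]
        rw [h1]
        calc (∑ j', |(P - Pt) j j'| ^ 2) ≤ (∑ j', |(P - Pt) j j'|) ^ 2 :=
              Finset.sum_sq_le_sq_sum_of_nonneg fun _ _ => abs_nonneg _
          _ ≤ Dp ^ 2 := pow_le_pow_left₀ (Finset.sum_nonneg fun _ _ => abs_nonneg _) (hDpj j) 2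
      calc (∑ j', (A j j') ^ 2) ≤ (∑ j', (P j j' - Pt j j') ^ 2) / δ ^ 2 := step1
        _ ≤ Dp ^ 2 / δ ^ 2 := by gcongr
    have htot : (∑ j, ∑ j', (A j j') ^ 2) ≤ (K1 : ℝ) * (Dp / δ) ^ 2 := by
      calc (∑ j, ∑ j', (A j j') ^ 2) ≤ ∑ _j : Fin K1, Dp ^ 2 / δ ^ 2 :=
            Finset.sum_le_sum fun j _ => hrow j
        _ = (K1 : ℝ) * (Dp / δ) ^ 2 := by
            rw [Finset.sum_const, Finset.card_univ, Fintype.card_fin]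
            rw [div_pow]; ring
    calc fA ≤ Real.sqrt ((K1 : ℝ) * (Dp / δ) ^ 2) := Real.sqrt_le_sqrt htot
      _ = Real.sqrt (K1 : ℝ) * (Dp / δ) := by
          rw [Real.sqrt_mul (by positivity), Real.sqrt_sq (by positivity)]
      _ ≤ S * (Dp / δ) := by gcongr <;> positivity
      _ = S / δ * Dp := by ring
  -- sum of squares of Pt is at most 1
  have hPtsq : (∑ j, ∑ j', (Pt j j') ^ 2) ≤ 1 := by
    have h1 : (∑ j, ∑ j', (Pt j j') ^ 2) = ∑ p : Fin K1 × Fin K2, (Pt p.1 p.2) ^ 2 :=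
      (Fintype.sum_prod_type (fun p : Fin K1 × Fin K2 => (Pt p.1 p.2) ^ 2)).symm
    have h2 : (∑ j, ∑ j', Pt j j') = ∑ p : Fin K1 × Fin K2, Pt p.1 p.2 :=
      (Fintype.sum_prod_type (fun p : Fin K1 × Fin K2 => Pt p.1 p.2)).symm
    rw [h1]
    calc (∑ p : Fin K1 × Fin K2, (Pt p.1 p.2) ^ 2)
        ≤ (∑ p : Fin K1 × Fin K2, Pt p.1 p.2) ^ 2 :=
          Finset.sum_sq_le_sq_sum_of_nonneg fun p _ => hPt0 p.1 p.2
      _ = 1 := by rw [← h2, hPt1]; norm_num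
  -- bound fB
  have hfB : fB ≤ S / (2 * δ ^ 2) * Dr := by
    have hentry : ∀ j j', (B j j') ^ 2 ≤ (Pt j j') ^ 2 * (Dr / (2 * δ ^ 2)) ^ 2 := by
      intro j j'
      have habs : |B j j'| ≤ Pt j j' * (Dr / (2 * δ ^ 2)) := by
        rw [hBdef]
        simp only
        rw [abs_mul, abs_of_nonneg (hPt0 j j')]
        apply mul_le_mul_of_nonneg_left _ (hPt0 j j')
        have h0 : |(1 / Real.sqrt (rowMarg P j) - 1 / Real.sqrt (rowMarg Pt j))
            / Real.sqrt (colMarg P j')|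
            = |1 / Real.sqrt (rowMarg P j) - 1 / Real.sqrt (rowMarg Pt j)|
              / Real.sqrt (colMarg P j') := by
          rw [abs_div, abs_of_pos (Real.sqrt_pos.2 (hcP j'))]
        rw [h0]
        calc |1 / Real.sqrt (rowMarg P j) - 1 / Real.sqrt (rowMarg Pt j)|
              / Real.sqrt (colMarg P j')
            ≤ |rowMarg P j - rowMarg Pt j| / (2 * δ ^ 2) :=
              key_frac δ _ _ _ hδ (hδler j).1 (hδler j).2 (hδlec j').1
          _ ≤ Dr / (2 * δ ^ 2) := by gcongr; exact hDrj j
      calc (B j j') ^ 2 = |B j j'| ^ 2 := (sq_abs _).symm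
        _ ≤ (Pt j j' * (Dr / (2 * δ ^ 2))) ^ 2 :=
            pow_le_pow_left₀ (abs_nonneg _) habs 2
        _ = (Pt j j') ^ 2 * (Dr / (2 * δ ^ 2)) ^ 2 := by ring
    have htot : (∑ j, ∑ j', (B j j') ^ 2) ≤ (Dr / (2 * δ ^ 2)) ^ 2 := by
      calc (∑ j, ∑ j', (B j j') ^ 2)
          ≤ ∑ j, ∑ j', (Pt j j') ^ 2 * (Dr / (2 * δ ^ 2)) ^ 2 :=
            Finset.sum_le_sum fun j _ => Finset.sum_le_sum fun j' _ => hentry j j'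
        _ = (∑ j, ∑ j', (Pt j j') ^ 2) * (Dr / (2 * δ ^ 2)) ^ 2 := by
            rw [Finset.sum_mul]
            exact Finset.sum_congr rfl fun j _ => by rw [Finset.sum_mul]
        _ ≤ 1 * (Dr / (2 * δ ^ 2)) ^ 2 := by gcongr
        _ = (Dr / (2 * δ ^ 2)) ^ 2 := one_mul _
    calc fB ≤ Real.sqrt ((Dr / (2 * δ ^ 2)) ^ 2) := Real.sqrt_le_sqrt htot
      _ = Dr / (2 * δ ^ 2) := Real.sqrt_sq (by positivity)
      _ = 1 * (Dr / (2 * δ ^ 2)) := (one_mul _).symm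
      _ ≤ S * (Dr / (2 * δ ^ 2)) := by gcongr <;> positivity
      _ = S / (2 * δ ^ 2) * Dr := by ring
  -- bound fC
  have hfC : fC ≤ S / (2 * δ ^ 2) * Dc := by
    have hentry : ∀ j j', (C j j') ^ 2 ≤ (Pt j j') ^ 2 * (Dc / (2 * δ ^ 2)) ^ 2 := by
      intro j j'
      have habs : |C j j'| ≤ Pt j j' * (Dc / (2 * δ ^ 2)) := by
        rw [hCdef]
        simp only
        rw [abs_mul, abs_of_nonneg (hPt0 j j')]
        apply mul_le_mul_of_nonneg_left _ (hPt0 j j')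
        have h0 : |(1 / Real.sqrt (colMarg P j') - 1 / Real.sqrt (colMarg Pt j'))
            / Real.sqrt (rowMarg Pt j)|
            = |1 / Real.sqrt (colMarg P j') - 1 / Real.sqrt (colMarg Pt j')|
              / Real.sqrt (rowMarg Pt j) := by
          rw [abs_div, abs_of_pos (Real.sqrt_pos.2 (hrPt j))]
        rw [h0]
        calc |1 / Real.sqrt (colMarg P j') - 1 / Real.sqrt (colMarg Pt j')|
              / Real.sqrt (rowMarg Pt j)
            ≤ |colMarg P j' - colMarg Pt j'| / (2 * δ ^ 2) :=
              key_frac δ _ _ _ hδ (hδlec j').1 (hδlec j').2 (hδler j).2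
          _ ≤ Dc / (2 * δ ^ 2) := by gcongr; exact hDcj j'
      calc (C j j') ^ 2 = |C j j'| ^ 2 := (sq_abs _).symm
        _ ≤ (Pt j j' * (Dc / (2 * δ ^ 2))) ^ 2 :=
            pow_le_pow_left₀ (abs_nonneg _) habs 2
        _ = (Pt j j') ^ 2 * (Dc / (2 * δ ^ 2)) ^ 2 := by ring
    have htot : (∑ j, ∑ j', (C j j') ^ 2) ≤ (Dc / (2 * δ ^ 2)) ^ 2 := by
      calc (∑ j, ∑ j', (C j j') ^ 2)
          ≤ ∑ j, ∑ j', (Pt j j') ^ 2 * (Dc / (2 * δ ^ 2)) ^ 2 :=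
            Finset.sum_le_sum fun j _ => Finset.sum_le_sum fun j' _ => hentry j j'
        _ = (∑ j, ∑ j', (Pt j j') ^ 2) * (Dc / (2 * δ ^ 2)) ^ 2 := by
            rw [Finset.sum_mul]
            exact Finset.sum_congr rfl fun j _ => by rw [Finset.sum_mul]
        _ ≤ 1 * (Dc / (2 * δ ^ 2)) ^ 2 := by gcongr
        _ = (Dc / (2 * δ ^ 2)) ^ 2 := one_mul _
    calc fC ≤ Real.sqrt ((Dc / (2 * δ ^ 2)) ^ 2) := Real.sqrt_le_sqrt htot
      _ = Dc / (2 * δ ^ 2) := Real.sqrt_sq (by positivity)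
      _ = 1 * (Dc / (2 * δ ^ 2)) := (one_mul _).symm
      _ ≤ S * (Dc / (2 * δ ^ 2)) := by gcongr <;> positivity
      _ = S / (2 * δ ^ 2) * Dc := by ring
  linarith
end
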